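/- arXiv:1906.02232 — 5 statements merged into one kernel-verified Lean document; each statement's English description precedes it below -/
import Mathlib

section
/- Let K ⊆ [0,M] be compact and χ : [0,M] × ℝ≥0 → ℝ^d be continuous when restricted to K × ℝ≥0, with each χ(ξ,·) 1-Lipschitz and eventually constant. Define τ(ξ) as the smallest time after which χ(ξ,·) is constant. Then the map ξ ↦ τ(ξ) is lower semicontinuous on K. -/
open Set

/-- If `χ` is continuous on `K × ℝ≥0`, each `χ(ξ,·)` is 1-Lipschitz and eventually
constant, and `τ(ξ)` is the smallest time after which `χ(ξ,·)` is constant, then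
`τ` is lower semicontinuous on the compact set `K ⊆ [0,M]`. -/
theorem stmt_2 {d : ℕ} (M : ℝ) (χ : ℝ → ℝ → EuclideanSpace ℝ (Fin d))
    (K : Set ℝ) (hK : IsCompact K) (hKsub : K ⊆ Set.Icc 0 M)
    (hcont : ContinuousOn (fun p : ℝ × ℝ => χ p.1 p.2) (K ×ˢ Set.Ici 0))
    (hLip : ∀ ξ ∈ K, LipschitzWith 1 (χ ξ))
    (hev : ∀ ξ ∈ K, ∃ τ₀ ≥ 0, ∀ t ≥ τ₀, χ ξ t = χ ξ τ₀)
    (τ : ℝ → ℝ)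
    (hτ : ∀ ξ ∈ K, τ ξ = sInf {τ₀ : ℝ | 0 ≤ τ₀ ∧ ∀ t ≥ τ₀, χ ξ t = χ ξ τ₀}) :
    LowerSemicontinuousOn τ K := by
  set S : ℝ → Set ℝ := fun ξ => {τ₀ : ℝ | 0 ≤ τ₀ ∧ ∀ t ≥ τ₀, χ ξ t = χ ξ τ₀} with hS
  have hSne : ∀ ξ ∈ K, (S ξ).Nonempty := by
    intro ξ hξ
    obtain ⟨τ₀, h0, h⟩ := hev ξ hξ
    exact ⟨τ₀, h0, h⟩
  have hSbdd : ∀ ξ, BddBelow (S ξ) := fun ξ => ⟨0, fun x hx => hx.1⟩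
  have hτ0 : ∀ ξ ∈ K, 0 ≤ τ ξ := by
    intro ξ hξ
    rw [hτ ξ hξ]
    exact le_csInf (hSne ξ hξ) fun x hx => hx.1
  intro ξ hξ c hc
  rcases lt_or_ge c 0 with hc0 | hc0
  · filter_upwards [self_mem_nhdsWithin] with η hη
    exact lt_of_lt_of_le hc0 (hτ0 η hη)
  · -- pick c' with c < c' < τ ξ
    obtain ⟨c', hcc', hc'τ⟩ := exists_between hc
    have hc'0 : 0 ≤ c' := le_of_lt (lt_of_le_of_lt hc0 hcc')
    -- c' is not in S ξ, so there is t ≥ c' with χ ξ t ≠ χ ξ c'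
    have hnotS : c' ∉ S ξ := by
      intro hmem
      have : τ ξ ≤ c' := by
        rw [hτ ξ hξ]; exact csInf_le (hSbdd ξ) hmem
      exact absurd hc'τ (not_lt.mpr this)
    have : ∃ t ≥ c', χ ξ t ≠ χ ξ c' := by
      by_contra h
      push_neg at h
      exact hnotS ⟨hc'0, h⟩
    obtain ⟨t, htc', hne⟩ := this
    have ht0 : 0 ≤ t := le_trans hc'0 htc'
    -- continuity of η ↦ χ η t and η ↦ χ η c' on K
    have hct : ContinuousOn (fun η => χ η t) K := by
      have : ContinuousOn (fun η : ℝ => ((η, t) : ℝ × ℝ)) K :=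
        (continuous_id.prodMk continuous_const).continuousOn
      exact hcont.comp this (fun η hη => ⟨hη, ht0⟩)
    have hcc : ContinuousOn (fun η => χ η c') K := by
      have : ContinuousOn (fun η : ℝ => ((η, c') : ℝ × ℝ)) K :=
        (continuous_id.prodMk continuous_const).continuousOn
      exact hcont.comp this (fun η hη => ⟨hη, hc'0⟩)
    have hF : ContinuousWithinAt (fun η => dist (χ η t) (χ η c')) K ξ :=
      (hct ξ hξ).dist (hcc ξ hξ)
    have hpos : 0 < dist (χ ξ t) (χ ξ c') := dist_pos.mpr hne
    have hev' : ∀ᶠ η in nhdsWithin ξ K, 0 < dist (χ η t) (χ η c') :=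
      hF.eventually (eventually_gt_nhds hpos)
    filter_upwards [hev', self_mem_nhdsWithin] with η hηpos hηK
    by_contra h
    push_neg at h
    -- τ η ≤ c < c', so there is τ₀ ∈ S η with τ₀ < c'
    have hlt : sInf (S η) < c' := by
      calc sInf (S η) = τ η := (hτ η hηK).symm
        _ ≤ c := h
        _ < c' := hcc'
    obtain ⟨τ₀, hτ₀S, hτ₀lt⟩ := exists_lt_of_csInf_lt (hSne η hηK) hlt
    have h1 : χ η c' = χ η τ₀ := hτ₀S.2 c' (le_of_lt hτ₀lt)
    have h2 : χ η t = χ η τ₀ := hτ₀S.2 t (le_trans (le_of_lt hτ₀lt) htc')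
    rw [h1, h2, dist_self] at hηpos
    exact lt_irrefl 0 hηpos
end

section
/- Let f : [ε,∞) → ℝ≥0 be Lipschitz continuous and let m : [0,T] → [ε,∞) be non-increasing with m(T) ≥ ε. Then there exists a unique function w : [0,T] → [ε,∞) satisfying the integral equation w(t) = ∫_t^T f(w(s)) ds + m(t) for all t ∈ [0,T]. -/
/-!
Extend `f` by `x ↦ f (max x ε)` and `m` by constants outside `[0, T]`, and write `w = v + m`.
Then `v` is a fixed point of the Picard operator `v ↦ (t ↦ ∫ s in t..T, f (v s + m s))` on
bounded continuous functions. By induction its `n`-th iterate moves points by at most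
`(L (T - t))ⁿ / n!` times their distance, so some iterate is a contraction and the fixed point
exists and is unique.

Since a non-integrable integrand has integral `0` in Lean, an arbitrary solution must first be
shown to make `s ↦ f (w s)` integrable on `[0, T]`. Let `q` be the infimum of the `t` for which it
is integrable on `[t, T]`. Below `q` the equation reads `w = m`. Above `q`,
`J t = ∫ s in t..T, f (w s)` is decreasing and `f (w s) ≤ C + L J s`, so one step of length `δ`
with `L δ ≤ 1/2` bounds `J` uniformly on `(q, T]`.
-/

open Set MeasureTheory intervalIntegral Filter
open scoped NNReal BoundedContinuousFunction Nat

theorem LipschitzWith.intervalIntegrable_comp {E F : Type*} [NormedAddCommGroup E]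
    [NormedAddCommGroup F] {g : E → F} {K : ℝ≥0} (hg : LipschitzWith K g) {u : ℝ → E}
    {μ : Measure ℝ} [IsLocallyFiniteMeasure μ] {a b : ℝ} (hu : IntervalIntegrable u μ a b) :
    IntervalIntegrable (g ∘ u) μ a b := by
  refine ((intervalIntegrable_const (c := ‖g 0‖)).add (hu.norm.const_mul K)).mono_fun'
    (hg.continuous.comp_aestronglyMeasurable hu.def'.aestronglyMeasurable)
    (ae_of_all _ fun x => ?_)
  have := hg.norm_sub_le (u x) 0
  rw [sub_zero] at this
  simp only [Function.comp_apply]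
  linarith [norm_le_insert' (g (u x)) (g 0)]

theorem integral_sub_pow (a b : ℝ) (n : ℕ) :
    ∫ s in a..b, (b - s) ^ n = (b - a) ^ (n + 1) / (n + 1) := by
  simp [integral_comp_sub_left (fun x => x ^ n) b, integral_pow]

theorem ContractingWith.existsUnique_isFixedPt_of_iterate {α : Type*} [MetricSpace α]
    [Nonempty α] [CompleteSpace α] {K : ℝ≥0} {f : α → α} {n : ℕ}
    (hf : ContractingWith K f^[n]) : ∃! x, Function.IsFixedPt f x :=
  ⟨_, hf.isFixedPt_fixedPoint_iterate, fun _ hx => hf.fixedPoint_unique (hx.iterate n)⟩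

section TailIntegral

variable {T : ℝ} (hT : 0 ≤ T) {h : ℝ → ℝ} (hh : IntervalIntegrable h volume 0 T)

noncomputable def tailIntegral : ℝ →ᵇ ℝ :=
  (BoundedContinuousFunction.mkOfCompact
    ⟨fun t : Icc 0 T => ∫ s in t..T, h s,
      (continuousOn_primitive_interval_left ((intervalIntegrable_iff' (f := h)).mp hh)
        ).comp_continuous continuous_subtype_val
        fun t => by simpa only [uIcc_of_le hT] using t.2⟩).compContinuous
    ⟨projIcc 0 T hT, continuous_projIcc⟩

theorem tailIntegral_apply (t : ℝ) :
    tailIntegral hT hh t = ∫ s in (projIcc 0 T hT t : ℝ)..T, h s :=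
  rfl

theorem tailIntegral_apply_of_mem {t : ℝ} (ht : t ∈ Icc 0 T) :
    tailIntegral hT hh t = ∫ s in t..T, h s := by
  rw [tailIntegral_apply, projIcc_of_mem hT ht]

end TailIntegral

section Picard

variable {T : ℝ} (hT : 0 ≤ T) {g : ℝ → ℝ} {L : ℝ≥0} (hg : LipschitzWith L g)
  {M : ℝ → ℝ} (hM : IntervalIntegrable M volume 0 T)

include hg hM in
theorem intervalIntegrable_comp_add (v : ℝ →ᵇ ℝ) :
    IntervalIntegrable (fun s => g (v s + M s)) volume 0 T :=
  hg.intervalIntegrable_comp ((v.continuous.intervalIntegrable 0 T).add hM)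

noncomputable def picard (v : ℝ →ᵇ ℝ) : ℝ →ᵇ ℝ :=
  tailIntegral hT (intervalIntegrable_comp_add hg hM v)

theorem picard_apply (v : ℝ →ᵇ ℝ) (t : ℝ) :
    picard hT hg hM v t = ∫ s in (projIcc 0 T hT t : ℝ)..T, g (v s + M s) :=
  rfl

theorem picard_apply_of_mem (v : ℝ →ᵇ ℝ) {t : ℝ} (ht : t ∈ Icc 0 T) :
    picard hT hg hM v t = ∫ s in t..T, g (v s + M s) :=
  tailIntegral_apply_of_mem hT _ ht

theorem abs_picard_iterate_sub_le (n : ℕ) (v u : ℝ →ᵇ ℝ) (t : ℝ) :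
    |(picard hT hg hM)^[n] v t - (picard hT hg hM)^[n] u t| ≤
      (L * (T - projIcc 0 T hT t)) ^ n / n ! * dist v u := by
  induction n generalizing t with
  | zero => simpa [← Real.dist_eq] using BoundedContinuousFunction.dist_coe_le_dist t
  | succ n ih =>
    set V := (picard hT hg hM)^[n] v
    set U := (picard hT hg hM)^[n] u
    rcases hct : projIcc 0 T hT t with ⟨c, hc0, hcT⟩
    have hint (w : ℝ →ᵇ ℝ) : IntervalIntegrable (fun s => g (w s + M s)) volume c T :=
      (intervalIntegrable_comp_add hg hM w).mono_set <| by
        rw [uIcc_of_le hcT, uIcc_of_le hT]; exact Icc_subset_Icc_left hc0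
    have hbound : ∀ s ∈ Ioc c T, ‖g (V s + M s) - g (U s + M s)‖ ≤
        L ^ (n + 1) / n ! * dist v u * (T - s) ^ n := by
      intro s hs
      have hs' : s ∈ Icc 0 T := ⟨hc0.trans hs.1.le, hs.2⟩
      calc ‖g (V s + M s) - g (U s + M s)‖ ≤ L * |V s - U s| := by
            simpa [Real.dist_eq] using hg.dist_le_mul (V s + M s) (U s + M s)
        _ ≤ L * ((L * (T - s)) ^ n / n ! * dist v u) := by
            gcongr
            simpa [projIcc_of_mem hT hs'] using ih s
        _ = L ^ (n + 1) / n ! * dist v u * (T - s) ^ n := by rw [mul_pow]; ring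
    calc |(picard hT hg hM)^[n + 1] v t - (picard hT hg hM)^[n + 1] u t|
        = |∫ s in c..T, (g (V s + M s) - g (U s + M s))| := by
          rw [Function.iterate_succ_apply', Function.iterate_succ_apply', picard_apply,
            picard_apply, hct, integral_sub (hint V) (hint U)]
      _ ≤ ∫ s in c..T, L ^ (n + 1) / n ! * dist v u * (T - s) ^ n :=
          norm_integral_le_of_norm_le hcT (ae_of_all _ hbound)
            (Continuous.intervalIntegrable (by fun_prop) _ _)
      _ = (L * (T - c)) ^ (n + 1) / (n + 1)! * dist v u := by
          rw [intervalIntegral.integral_const_mul, integral_sub_pow, Nat.factorial_succ, mul_pow]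
          push_cast
          field_simp

theorem lipschitzWith_picard_iterate (n : ℕ) :
    LipschitzWith ((L * T.toNNReal) ^ n / n !) (picard hT hg hM)^[n] := by
  have hK : (((L * T.toNNReal) ^ n / n ! : ℝ≥0) : ℝ) = (L * T) ^ n / n ! := by
    push_cast [Real.coe_toNNReal _ hT]; rfl
  refine LipschitzWith.of_dist_le_mul fun v u => (BoundedContinuousFunction.dist_le
    (by positivity)).mpr fun t => ?_
  rw [Real.dist_eq, hK]
  refine (abs_picard_iterate_sub_le hT hg hM n v u t).trans ?_
  have hc := (projIcc 0 T hT t).2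
  gcongr
  · exact mul_nonneg L.2 (sub_nonneg.mpr hc.2)
  · linarith [hc.1]

theorem existsUnique_isFixedPt_picard : ∃! v, Function.IsFixedPt (picard hT hg hM) v := by
  obtain ⟨n, hn⟩ : ∃ n : ℕ, (L * T.toNNReal) ^ n / n ! < 1 := by
    simp_rw [← NNReal.coe_lt_coe]
    push_cast [Real.coe_toNNReal _ hT]
    exact ((FloorSemiring.tendsto_pow_div_factorial_atTop _).eventually
      (gt_mem_nhds one_pos)).exists
  exact ContractingWith.existsUnique_isFixedPt_of_iterate
    ⟨hn, lipschitzWith_picard_iterate hT hg hM n⟩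

theorem isFixedPt_picard_tailIntegral {w : ℝ → ℝ}
    (hw : ∀ t ∈ Icc 0 T, w t = (∫ s in t..T, g (w s)) + M t)
    (hgw : IntervalIntegrable (fun s => g (w s)) volume 0 T) :
    Function.IsFixedPt (picard hT hg hM) (tailIntegral hT hgw) := by
  ext t
  rw [picard_apply, tailIntegral_apply]
  obtain ⟨c, hc0, hcT⟩ := projIcc 0 T hT t
  refine integral_congr fun s hs => ?_
  rw [uIcc_of_le hcT] at hs
  have hs' : s ∈ Icc 0 T := ⟨hc0.trans hs.1, hs.2⟩
  rw [tailIntegral_apply_of_mem hT hgw hs', ← hw s hs']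

end Picard

theorem integrableOn_Ioc_of_forall_integral_le {h : ℝ → ℝ} {q T B : ℝ}
    (h0 : ∀ s ∈ Ioc q T, 0 ≤ h s) (hint : ∀ t ∈ Ioc q T, IntervalIntegrable h volume t T)
    (hB : ∀ t ∈ Ioc q T, ∫ s in t..T, h s ≤ B) : IntegrableOn h (Ioc q T) := by
  rcases le_or_gt T q with hTq | hqT
  · rw [Ioc_eq_empty hTq.not_gt]
    exact integrableOn_empty
  set a : ℕ → ℝ := fun n => q + (T - q) * (1 / (n + 1))
  have ha (n : ℕ) : a n ∈ Ioc q T := by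
    have hn : (0 : ℝ) < 1 / (n + 1) := by positivity
    have hn1 : 1 / ((n : ℝ) + 1) ≤ 1 := by
      rw [div_le_one (by positivity)]; linarith [n.cast_nonneg (α := ℝ)]
    constructor <;> nlinarith
  have ha_lim : Tendsto a atTop (nhds q) := by
    have := tendsto_const_nhds (x := q).add
      ((tendsto_one_div_add_atTop_nhds_zero_nat (𝕜 := ℝ)).const_mul (T - q))
    rwa [mul_zero, add_zero] at this
  refine integrableOn_Ioc_of_intervalIntegral_norm_bounded_left (I := B)
    (fun n => (intervalIntegrable_iff_integrableOn_Ioc_of_le (ha n).2).mp (hint _ (ha n))) ha_lim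
    (Eventually.of_forall fun n => ?_)
  refine le_trans ?_ (hB _ (ha n))
  rw [integral_of_le (ha n).2]
  refine (setIntegral_congr_fun measurableSet_Ioc fun s hs => ?_).le
  exact Real.norm_of_nonneg (h0 s ⟨(ha n).1.trans hs.1, hs.2⟩)

theorem integrableOn_Ioc_of_le_add_mul_integral {h k : ℝ → ℝ} {q T : ℝ} {L : ℝ≥0}
    (h0 : ∀ s ∈ Ioc q T, 0 ≤ h s) (hk : IntervalIntegrable k volume q T)
    (hhk : ∀ s ∈ Ioc q T, h s ≤ k s + L * ∫ u in s..T, h u)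
    (hint : ∀ t ∈ Ioc q T, IntervalIntegrable h volume t T) : IntegrableOn h (Ioc q T) := by
  rcases le_or_gt T q with hTq | hqT
  · rw [Ioc_eq_empty hTq.not_gt]
    exact integrableOn_empty
  set J : ℝ → ℝ := fun t => ∫ u in t..T, h u
  have hJ_nonneg (t : ℝ) (ht : t ∈ Ioc q T) : 0 ≤ J t :=
    integral_nonneg ht.2 fun u hu => h0 u ⟨ht.1.trans_le hu.1, hu.2⟩
  have hJ_split (s : ℝ) (hs : s ∈ Ioc q T) (t : ℝ) (ht : t ∈ Icc s T) :
      J s = (∫ u in s..t, h u) + J t :=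
    (integral_add_adjacent_intervals ((hint s hs).mono_set (by
      rw [uIcc_of_le ht.1, uIcc_of_le hs.2]; exact Icc_subset_Icc_right ht.2))
      (hint t ⟨hs.1.trans_le ht.1, ht.2⟩)).symm
  have hJ_anti (s : ℝ) (hs : s ∈ Ioc q T) (t : ℝ) (ht : t ∈ Icc s T) : J t ≤ J s := by
    rw [hJ_split s hs t ht, le_add_iff_nonneg_left]
    exact integral_nonneg ht.1 fun u hu => h0 u ⟨hs.1.trans_le hu.1, hu.2.trans ht.2⟩
  -- On `[t, q + δ]` the term `L * J ≤ L * J t` costs at most `J t / 2`, which is absorbed.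
  set δ : ℝ := 1 / (2 * (L + 1))
  have hLδ : L * δ ≤ 1 / 2 := by
    rw [mul_one_div, div_le_div_iff₀ (by positivity) two_pos]; linarith
  set a : ℝ := min (q + δ) T
  have ha : a ∈ Ioc q T :=
    ⟨lt_min (by linarith [show 0 < δ by positivity]) hqT, min_le_right _ _⟩
  set K : ℝ := ∫ u in q..T, |k u|
  have hK : 0 ≤ K := integral_nonneg hqT.le fun u _ => abs_nonneg _
  refine integrableOn_Ioc_of_forall_integral_le h0 hint (B := 2 * (K + J a)) fun t ht => ?_
  rcases le_total a t with hat | hta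
  · linarith [hJ_anti a ha t ⟨hat, ht.2⟩, hJ_nonneg a ha]
  have hta_int : IntervalIntegrable h volume t a := (hint t ht).mono_set (by
    rw [uIcc_of_le hta, uIcc_of_le ht.2]; exact Icc_subset_Icc_right ha.2)
  have hk_int : IntervalIntegrable (fun u => |k u|) volume t a := hk.abs.mono_set (by
    rw [uIcc_of_le hta, uIcc_of_le hqT.le]; exact Icc_subset_Icc ht.1.le ha.2)
  have hstep : ∫ u in t..a, h u ≤ K + L * J t * δ :=
    calc ∫ u in t..a, h u ≤ ∫ u in t..a, (|k u| + L * J t) := by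
          refine integral_mono_on hta hta_int (hk_int.add intervalIntegrable_const) fun u hu => ?_
          have hu' : u ∈ Ioc q T := ⟨ht.1.trans_le hu.1, hu.2.trans ha.2⟩
          calc h u ≤ k u + L * J u := hhk u hu'
            _ ≤ |k u| + L * J t := add_le_add (le_abs_self _)
                (mul_le_mul_of_nonneg_left (hJ_anti t ht u ⟨hu.1, hu'.2⟩) L.2)
      _ = (∫ u in t..a, |k u|) + L * J t * (a - t) := by
          rw [integral_add hk_int intervalIntegrable_const, intervalIntegral.integral_const,
            smul_eq_mul, mul_comm]
      _ ≤ K + L * J t * δ := by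
          have := hJ_nonneg t ht
          gcongr
          · exact integral_mono_interval ht.1.le hta ha.2 (ae_of_all _ fun _ => abs_nonneg _)
              hk.abs
          · linarith [min_le_left (q + δ) T, ht.1]
  have := mul_le_mul_of_nonneg_right hLδ (hJ_nonneg t ht)
  linarith [hJ_split t ht a ⟨hta, ha.2⟩]

theorem intervalIntegrable_comp_of_eq_integral_add {g M w : ℝ → ℝ} {L : ℝ≥0} {T : ℝ}
    (hT : 0 ≤ T) (hg : LipschitzWith L g) (hg0 : ∀ x, 0 ≤ g x)
    (hM : IntervalIntegrable M volume 0 T)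
    (hw : ∀ t ∈ Icc 0 T, w t = (∫ s in t..T, g (w s)) + M t) :
    IntervalIntegrable (fun s => g (w s)) volume 0 T := by
  set S : Set ℝ := {t ∈ Icc 0 T | IntervalIntegrable (fun s => g (w s)) volume t T}
  have hTS : T ∈ S := ⟨right_mem_Icc.mpr hT, IntervalIntegrable.refl⟩
  have hS_bdd : BddBelow S := ⟨0, fun t ht => ht.1.1⟩
  set q := sInf S
  have hq : q ∈ Icc 0 T := ⟨le_csInf ⟨T, hTS⟩ fun t ht => ht.1.1, csInf_le hS_bdd hTS⟩
  -- Below `q` the integral in the equation is the junk value `0`.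
  have hbelow (t : ℝ) (ht : t ∈ Ico 0 q) : w t = M t := by
    have htT : t ≤ T := ht.2.le.trans hq.2
    have hnot : ¬ IntervalIntegrable (fun s => g (w s)) volume t T := fun hi =>
      (csInf_le hS_bdd ⟨⟨ht.1, htT⟩, hi⟩).not_gt ht.2
    rw [hw t ⟨ht.1, htT⟩, integral_undef hnot, zero_add]
  have habove (t : ℝ) (ht : t ∈ Ioc q T) :
      IntervalIntegrable (fun s => g (w s)) volume t T := by
    obtain ⟨u, huS, hut⟩ := exists_lt_of_csInf_lt ⟨T, hTS⟩ ht.1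
    exact huS.2.mono_set (by
      rw [uIcc_of_le ht.2, uIcc_of_le huS.1.2]; exact Icc_subset_Icc_left hut.le)
  have hlow : IntervalIntegrable (fun s => g (w s)) volume 0 q := by
    have hgM := hg.intervalIntegrable_comp (hM.mono_set (by
      rw [uIcc_of_le hq.1, uIcc_of_le hT]; exact Icc_subset_Icc_right hq.2))
    rw [intervalIntegrable_iff_integrableOn_Ico_of_le hq.1] at hgM ⊢
    exact hgM.congr_fun (fun s hs => by simp [hbelow s hs]) measurableSet_Ico
  have hhigh : IntervalIntegrable (fun s => g (w s)) volume q T := by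
    rw [intervalIntegrable_iff_integrableOn_Ioc_of_le hq.2]
    refine integrableOn_Ioc_of_le_add_mul_integral (k := fun s => |g 0| + L * |M s|) (L := L)
      (fun s _ => hg0 _) ((intervalIntegrable_const.add (hM.abs.const_mul L)).mono_set ?_)
      (fun s hs => ?_) habove
    · rw [uIcc_of_le hq.2, uIcc_of_le hT]; exact Icc_subset_Icc_left hq.1
    have hs' : s ∈ Icc 0 T := ⟨hq.1.trans hs.1.le, hs.2⟩
    have hJ : 0 ≤ ∫ u in s..T, g (w u) := integral_nonneg hs.2 fun u _ => hg0 _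
    have hlip : |g (w s) - g 0| ≤ L * |w s| := by
      simpa [Real.dist_eq] using hg.dist_le_mul (w s) 0
    have hws : |w s| ≤ (∫ u in s..T, g (w u)) + |M s| := by
      rw [hw s hs']
      exact (abs_add_le _ _).trans_eq (by rw [abs_of_nonneg hJ])
    calc g (w s) ≤ |g 0| + L * |w s| := by
          linarith [le_abs_self (g (w s) - g 0), le_abs_self (g 0)]
      _ ≤ |g 0| + L * ((∫ u in s..T, g (w u)) + |M s|) := by gcongr
      _ = |g 0| + L * |M s| + L * ∫ u in s..T, g (w u) := by ring
  exact hlow.trans hhigh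

theorem exists_solution_integral_eq_add {g M : ℝ → ℝ} {L : ℝ≥0} {T : ℝ} (hT : 0 ≤ T)
    (hg : LipschitzWith L g) (hg0 : ∀ x, 0 ≤ g x) (hM : IntervalIntegrable M volume 0 T) :
    ∃ w : ℝ → ℝ, (∀ t, M t ≤ w t) ∧
      (∀ t ∈ Icc 0 T, w t = (∫ s in t..T, g (w s)) + M t) ∧
      ∀ w' : ℝ → ℝ, (∀ t ∈ Icc 0 T, w' t = (∫ s in t..T, g (w' s)) + M t) →
        EqOn w' w (Icc 0 T) := by
  obtain ⟨v, hv, hv_unique⟩ := existsUnique_isFixedPt_picard hT hg hM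
  have hv_apply (t : ℝ) : picard hT hg hM v t = v t := DFunLike.congr_fun hv t
  refine ⟨fun t => v t + M t, fun t => ?_, fun t ht => ?_, fun w' hw' t ht => ?_⟩
  · dsimp only
    rw [← hv_apply, picard_apply, le_add_iff_nonneg_left]
    exact integral_nonneg (projIcc 0 T hT t).2.2 fun _ _ => hg0 _
  · dsimp only
    rw [← hv_apply, picard_apply_of_mem hT hg hM v ht]
  · have hgw := intervalIntegrable_comp_of_eq_integral_add hT hg hg0 hM hw'
    rw [hw' t ht, ← tailIntegral_apply_of_mem hT hgw ht,
      hv_unique _ (isFixedPt_picard_tailIntegral hT hg hM hw' hgw)]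

theorem stmt_5_general (T ε : ℝ) (hT : 0 < T)
    (f : ℝ → ℝ) (L : NNReal)
    (hf : LipschitzOnWith L f (Set.Ici ε))
    (hfnn : ∀ x ∈ Set.Ici ε, 0 ≤ f x)
    (m : ℝ → ℝ)
    (hm : AntitoneOn m (Set.Icc 0 T))
    (hmε : ∀ t ∈ Set.Icc (0:ℝ) T, ε ≤ m t) :
    ∃ w : ℝ → ℝ,
      (∀ t ∈ Set.Icc (0:ℝ) T, ε ≤ w t) ∧
      (∀ t ∈ Set.Icc (0:ℝ) T, w t = (∫ s in t..T, f (w s)) + m t) ∧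
      ∀ w' : ℝ → ℝ,
        (∀ t ∈ Set.Icc (0:ℝ) T, ε ≤ w' t) →
        (∀ t ∈ Set.Icc (0:ℝ) T, w' t = (∫ s in t..T, f (w' s)) + m t) →
        Set.EqOn w w' (Set.Icc 0 T) := by
  set g : ℝ → ℝ := fun x => f (max x ε)
  have hg : LipschitzWith L g := by
    have := lipschitzOnWith_univ.mp
      (hf.comp (LipschitzWith.id.max_const ε).lipschitzOnWith fun x _ => le_max_right x ε)
    rwa [mul_one] at this
  have hg0 (x : ℝ) : 0 ≤ g x := hfnn _ (le_max_right x ε)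
  set M : ℝ → ℝ := IccExtend hT.le fun t => m t
  have hM_anti : Antitone M := fun a b hab =>
    hm (projIcc 0 T hT.le a).2 (projIcc 0 T hT.le b).2 (monotone_projIcc hT.le hab)
  have hMm (t : ℝ) (ht : t ∈ Icc 0 T) : M t = m t := IccExtend_of_mem hT.le _ ht
  have hfg (w : ℝ → ℝ) (hwε : ∀ t ∈ Icc 0 T, ε ≤ w t) (t : ℝ) (ht : t ∈ Icc 0 T) :
      (∫ s in t..T, f (w s)) + m t = (∫ s in t..T, g (w s)) + M t := by
    rw [hMm t ht]
    congr 1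
    refine integral_congr fun s hs => ?_
    rw [uIcc_of_le ht.2] at hs
    simp only [g, max_eq_left (hwε s ⟨ht.1.trans hs.1, hs.2⟩)]
  obtain ⟨w, hwM, hw, hw_unique⟩ :=
    exists_solution_integral_eq_add hT.le hg hg0 hM_anti.intervalIntegrable
  have hwε (t : ℝ) (ht : t ∈ Icc 0 T) : ε ≤ w t := (hmε t ht).trans (hMm t ht ▸ hwM t)
  exact ⟨w, hwε, fun t ht => (hw t ht).trans (hfg w hwε t ht).symm,
    fun w' hw'ε hw' => (hw_unique w' fun t ht => (hw' t ht).trans (hfg w' hw'ε t ht)).symm⟩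

/-- Existence and uniqueness of the solution `w : [0,T] → [ε,∞)` of the backward
integral equation `w(t) = ∫_t^T f(w(s)) ds + m(t)`. -/
theorem stmt_5 (T ε : ℝ) (hT : 0 < T) (hε : 0 < ε)
    (f : ℝ → ℝ) (L : NNReal)
    (hf : LipschitzOnWith L f (Set.Ici ε))
    (hfnn : ∀ x ∈ Set.Ici ε, 0 ≤ f x)
    (m : ℝ → ℝ)
    (hm : AntitoneOn m (Set.Icc 0 T))
    (hmε : ∀ t ∈ Set.Icc (0:ℝ) T, ε ≤ m t) :
    ∃ w : ℝ → ℝ,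
      (∀ t ∈ Set.Icc (0:ℝ) T, ε ≤ w t) ∧
      (∀ t ∈ Set.Icc (0:ℝ) T, w t = (∫ s in t..T, f (w s)) + m t) ∧
      ∀ w' : ℝ → ℝ,
        (∀ t ∈ Set.Icc (0:ℝ) T, ε ≤ w' t) →
        (∀ t ∈ Set.Icc (0:ℝ) T, w' t = (∫ s in t..T, f (w' s)) + m t) →
        Set.EqOn w w' (Set.Icc 0 T) :=
  stmt_5_general T ε hT f L hf hfnn m hm hmε
end

section
/- Let f satisfy (A1) (continuous, f(0)=0, increasing, concave), and let m, m₁,…,m_q : [0,ℓ] → [ε₀,∞) be non-increasing functions with ∑_{i=1}^q mᵢ(s) ≥ m(s) for all s ∈ [0,ℓ]. Let w and wᵢ be solutions of w(s) = ∫_s^ℓ f(w(t)) dt + m(s) and wᵢ(s) = ∫_s^ℓ f(wᵢ(t)) dt + mᵢ(s) respectively. Then ∑_{i=1}^q wᵢ(s) ≥ w(s) for all s ∈ [0,ℓ]. -/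
/-!
Write `W = ∑ᵢ wᵢ`. Subtracting the equations and using `∑ᵢ mᵢ ≥ m` gives
`w(s) - W(s) ≤ ∫ₛ^ℓ (f(w) - ∑ᵢ f(wᵢ))`, and by subadditivity of `f` the integrand is at most
`f(w) - f(W)`. On `[ε₀, ∞)` the concave increasing `f` satisfies `f(x) - f(y) ≤ f'(ε₀) (x - y)⁺`,
so `(w - W)⁺` obeys a homogeneous backward Gronwall inequality and vanishes.

Since `∫ t in s..ℓ` is `0` for a non-integrable integrand, the equations carry information only
once `f ∘ w` and `f ∘ wᵢ` are known to be integrable. This comes from the same Gronwall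
inequality, which bounds a solution `u` wherever its tail integral exists, together with
monotonicity: `u` is antitone where the tail integral exists and equals the datum elsewhere.
-/

open Set MeasureTheory Real
open scoped Nat

lemma IntervalIntegrable.mono_set_left {E : Type*} [NormedAddCommGroup E] {μ : Measure ℝ}
    {g : ℝ → E} {a b c : ℝ}
    (h : IntervalIntegrable g μ a b) (hc : c ∈ Icc a b) : IntervalIntegrable g μ c b :=
  h.mono_set (uIcc_subset_uIcc (mem_uIcc_of_le hc.1 hc.2) right_mem_uIcc)

lemma intervalIntegrable_finsetSum {ι E : Type*} [NormedAddCommGroup E] (s : Finset ι)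
    {μ : Measure ℝ} {g : ι → ℝ → E} {a b : ℝ} (h : ∀ i ∈ s, IntervalIntegrable (g i) μ a b) :
    IntervalIntegrable (fun t => ∑ i ∈ s, g i t) μ a b := by
  simpa only [← Finset.sum_apply] using IntervalIntegrable.sum s h

lemma AntitoneOn.integrableOn_of_norm_le {μ : Measure ℝ} {g : ℝ → ℝ} {s : Set ℝ} {C : ℝ}
    (hg : AntitoneOn g s) (hs : MeasurableSet s) (hs' : μ s ≠ ⊤)
    (hC : ∀ x ∈ s, ‖g x‖ ≤ C) : IntegrableOn g s μ :=
  Integrable.mono' (integrableOn_const hs')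
    (aemeasurable_restrict_of_antitoneOn hs hg).aestronglyMeasurable
    ((ae_restrict_iff' hs).2 (ae_of_all _ hC))

lemma hasDerivAt_pow_div_factorial (L b x : ℝ) (n : ℕ) :
    HasDerivAt (fun x => (L * (b - x)) ^ (n + 1) / (n + 1)!)
      (-(L * ((L * (b - x)) ^ n / n !))) x := by
  refine (((((hasDerivAt_id x).const_sub b).const_mul L).pow (n + 1)).div_const
    ((n + 1)! : ℝ)).congr_deriv ?_
  rw [Nat.factorial_succ, id]
  push_cast
  field_simp

lemma integral_mul_exp_add_pow_div_factorial (A B L b t : ℝ) (n : ℕ) :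
    ∫ x in t..b, L * (A * exp (L * (b - x)) + B * ((L * (b - x)) ^ n / n !)) =
      A * exp (L * (b - t)) - A + B * ((L * (b - t)) ^ (n + 1) / (n + 1)!) := by
  have hderiv : ∀ x ∈ uIcc t b, HasDerivAt
      (fun x => -(A * exp (L * (b - x)) + B * ((L * (b - x)) ^ (n + 1) / (n + 1)!)))
      (L * (A * exp (L * (b - x)) + B * ((L * (b - x)) ^ n / n !))) x := by
    intro x _
    have hexp := (((hasDerivAt_id x).const_sub b).const_mul L).exp.const_mul A
    refine ((hexp.add ((hasDerivAt_pow_div_factorial L b x n).const_mul B)).neg).congr_deriv ?_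
    simp only [id]
    ring
  rw [intervalIntegral.integral_eq_sub_of_hasDerivAt hderiv
    (Continuous.intervalIntegrable (by fun_prop) _ _)]
  simp
  ring

theorem le_mul_exp_of_le_add_integral {u g : ℝ → ℝ} {a b A B L : ℝ} (hA : 0 ≤ A) (hL : 0 ≤ L)
    (hg : IntervalIntegrable g volume a b)
    (huB : ∀ t ∈ Icc a b, u t ≤ B)
    (hgu : ∀ t ∈ Icc a b, g t ≤ L * max (u t) 0)
    (hu : ∀ t ∈ Icc a b, u t ≤ A + ∫ x in t..b, g x) :
    ∀ t ∈ Icc a b, u t ≤ A * exp (L * (b - t)) := by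
  set B' := max B 0
  -- Picard iteration of the inequality, starting from the bound `u ≤ B'`
  have hiter : ∀ n : ℕ, ∀ t ∈ Icc a b,
      u t ≤ A * exp (L * (b - t)) + B' * ((L * (b - t)) ^ n / n !) := by
    intro n
    induction n with
    | zero =>
      intro t ht
      have : 0 ≤ A * exp (L * (b - t)) := by positivity
      simp only [pow_zero, Nat.factorial_zero, Nat.cast_one, div_one, mul_one]
      linarith [huB t ht, le_max_left B 0]
    | succ n ih =>
      intro t ht
      have hintegral : ∫ x in t..b, g x ≤
          ∫ x in t..b, L * (A * exp (L * (b - x)) + B' * ((L * (b - x)) ^ n / n !)) := by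
        refine intervalIntegral.integral_mono_on ht.2 (hg.mono_set_left ht)
          (Continuous.intervalIntegrable (by fun_prop) _ _) fun x hx => ?_
        have hxI : x ∈ Icc a b := ⟨ht.1.trans hx.1, hx.2⟩
        have hpos : 0 ≤ A * exp (L * (b - x)) + B' * ((L * (b - x)) ^ n / n !) := by
          have : 0 ≤ L * (b - x) := mul_nonneg hL (sub_nonneg.2 hx.2)
          positivity
        exact (hgu x hxI).trans (mul_le_mul_of_nonneg_left (max_le (ih x hxI) hpos) hL)
      rw [integral_mul_exp_add_pow_div_factorial] at hintegral
      linarith [hu t ht]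
  intro t ht
  have htend : Filter.Tendsto
      (fun n : ℕ => A * exp (L * (b - t)) + B' * ((L * (b - t)) ^ n / n !))
      Filter.atTop (nhds (A * exp (L * (b - t)))) := by
    simpa using ((FloorSemiring.tendsto_pow_div_factorial_atTop (L * (b - t))).const_mul
      B').const_add (A * exp (L * (b - t)))
  exact ge_of_tendsto' htend fun n => hiter n t ht

lemma ConcaveOn.map_add_le {f : ℝ → ℝ} (hf : ConcaveOn ℝ (Ici 0) f) (hf0 : 0 ≤ f 0)
    {a b : ℝ} (ha : 0 ≤ a) (hb : 0 ≤ b) : f (a + b) ≤ f a + f b := by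
  rcases (add_nonneg ha hb).eq_or_lt with hab | hab
  · obtain ⟨rfl, rfl⟩ : a = 0 ∧ b = 0 := ⟨by linarith, by linarith⟩
    simpa using hf0
  have hne : a + b ≠ 0 := hab.ne'
  -- each of `a`, `b` is a convex combination of `0` and `a + b`
  have key : ∀ c, 0 ≤ c → c ≤ a + b → c / (a + b) * f (a + b) ≤ f c := by
    intro c hc hcab
    have h := hf.2 (mem_Ici.2 le_rfl) (mem_Ici.2 hab.le) (div_nonneg (sub_nonneg.2 hcab) hab.le)
      (div_nonneg hc hab.le) (by field_simp; ring)
    have hc' : ((a + b - c) / (a + b)) • (0 : ℝ) + (c / (a + b)) • (a + b) = c := by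
      rw [smul_zero, zero_add, smul_eq_mul]; field_simp
    rw [hc', smul_eq_mul, smul_eq_mul] at h
    nlinarith [mul_nonneg (div_nonneg (sub_nonneg.2 hcab) hab.le) hf0]
  have h1 := key a ha (by linarith)
  have h2 := key b hb (by linarith)
  have : a / (a + b) * f (a + b) + b / (a + b) * f (a + b) = f (a + b) := by
    field_simp
  linarith

lemma ConcaveOn.sub_le_mul_max_sub {f : ℝ → ℝ} {s : Set ℝ} {ε₀ L : ℝ}
    (hf : ConcaveOn ℝ s f) (hmono : MonotoneOn f s) (hε₀ : ε₀ ∈ s) (hL : HasDerivAt f L ε₀)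
    {x y : ℝ} (hx : x ∈ s) (hy : y ∈ s) (hεy : ε₀ ≤ y) :
    f x - f y ≤ L * max (x - y) 0 := by
  rcases le_or_gt x y with hxy | hxy
  · rw [max_eq_right (sub_nonpos.2 hxy), mul_zero]
    linarith [hmono hx hy hxy]
  rw [max_eq_left (sub_pos.2 hxy).le]
  have hslope : (f x - f y) / (x - y) ≤ L := by
    rcases hεy.eq_or_lt with rfl | hεy
    · simpa [slope_def_field] using hf.slope_le_of_hasDerivAt hε₀ hx hxy hL
    · exact (hf.slope_anti_adjacent hε₀ hx hεy hxy).trans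
        (by simpa [slope_def_field] using hf.slope_le_of_hasDerivAt hε₀ hy hεy hL)
  linarith [(div_le_iff₀ (sub_pos.2 hxy)).1 hslope]

section IntegralEquation

variable {f u μ : ℝ → ℝ} {ℓ ε₀ L : ℝ}

lemma eq_datum_of_not_intervalIntegrable (hu : ∀ s ∈ Icc 0 ℓ, u s = (∫ t in s..ℓ, f (u t)) + μ s)
    {s : ℝ} (hs : s ∈ Icc 0 ℓ) (hint : ¬ IntervalIntegrable (fun t => f (u t)) volume s ℓ) :
    u s = μ s := by
  rw [hu s hs, intervalIntegral.integral_undef hint, zero_add]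

lemma datum_le_of_eq_integral_add (hf : ∀ x, ε₀ ≤ x → 0 ≤ f x)
    (huε : ∀ s ∈ Icc 0 ℓ, ε₀ ≤ u s) (hu : ∀ s ∈ Icc 0 ℓ, u s = (∫ t in s..ℓ, f (u t)) + μ s) :
    ∀ s ∈ Icc 0 ℓ, μ s ≤ u s := by
  intro s hs
  rw [hu s hs]
  linarith [intervalIntegral.integral_nonneg (μ := volume) hs.2
    fun x hx => hf _ (huε x ⟨hs.1.trans hx.1, hx.2⟩)]

lemma antitoneOn_of_eq_integral_add (hf : ∀ x, ε₀ ≤ x → 0 ≤ f x)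
    (hμ : AntitoneOn μ (Icc 0 ℓ)) (huε : ∀ s ∈ Icc 0 ℓ, ε₀ ≤ u s)
    (hu : ∀ s ∈ Icc 0 ℓ, u s = (∫ t in s..ℓ, f (u t)) + μ s) :
    AntitoneOn u {s | s ∈ Icc 0 ℓ ∧ IntervalIntegrable (fun t => f (u t)) volume s ℓ} := by
  intro s hs t ht hst
  have hst' : IntervalIntegrable (fun t => f (u t)) volume s t :=
    hs.2.mono_set (uIcc_subset_uIcc left_mem_uIcc (mem_uIcc_of_le hst ht.1.2))
  have hsplit := intervalIntegral.integral_add_adjacent_intervals hst' ht.2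
  have hnonneg : 0 ≤ ∫ x in s..t, f (u x) := intervalIntegral.integral_nonneg hst
    fun x hx => hf _ (huε x ⟨hs.1.1.trans hx.1, hx.2.trans ht.1.2⟩)
  rw [hu s hs.1, hu t ht.1]
  linarith [hμ hs.1 ht.1 hst]

lemma le_mul_exp_of_eq_integral_add (hf : ∀ x, ε₀ ≤ x → 0 ≤ f x)
    (hf_lin : ∀ x, ε₀ ≤ x → f x ≤ f ε₀ + L * x) (hL : 0 ≤ L) (hμ0 : 0 ≤ μ 0)
    (hμ : AntitoneOn μ (Icc 0 ℓ)) (huε : ∀ s ∈ Icc 0 ℓ, ε₀ ≤ u s)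
    (hu : ∀ s ∈ Icc 0 ℓ, u s = (∫ t in s..ℓ, f (u t)) + μ s) :
    ∀ s ∈ Icc 0 ℓ, u s ≤ (μ 0 + f ε₀ * ℓ) * exp (L * ℓ) := by
  intro s hs
  have h0 : (0 : ℝ) ∈ Icc 0 ℓ := ⟨le_rfl, hs.1.trans hs.2⟩
  set A := μ 0 + f ε₀ * ℓ
  have hA : 0 ≤ A := add_nonneg hμ0 (mul_nonneg (hf ε₀ le_rfl) h0.2)
  have hAexp : A ≤ A * exp (L * ℓ) := le_mul_of_one_le_right hA (one_le_exp (mul_nonneg hL h0.2))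
  by_cases hint : IntervalIntegrable (fun t => f (u t)) volume s ℓ
  swap
  · rw [eq_datum_of_not_intervalIntegrable hu hs hint]
    linarith [hμ h0 hs hs.1, mul_nonneg (hf ε₀ le_rfl) h0.2]
  have hsub : ∀ t ∈ Icc s ℓ, t ∈ Icc 0 ℓ := fun t ht => ⟨hs.1.trans ht.1, ht.2⟩
  have hgronwall := le_mul_exp_of_le_add_integral (u := u) (g := fun t => f (u t) - f ε₀)
    (B := u s) hA hL (hint.sub intervalIntegrable_const)
    (fun t ht => antitoneOn_of_eq_integral_add hf hμ huε hu ⟨hs, hint⟩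
      ⟨hsub t ht, hint.mono_set_left ht⟩ ht.1)
    (fun t ht => by nlinarith [hf_lin _ (huε t (hsub t ht)), le_max_left (u t) 0])
    (fun t ht => by
      rw [intervalIntegral.integral_sub (hint.mono_set_left ht) intervalIntegrable_const,
        intervalIntegral.integral_const, smul_eq_mul, hu t (hsub t ht)]
      nlinarith [hμ h0 (hsub t ht) (hsub t ht).1, hf ε₀ le_rfl, ht.1, hs.1])
    s ⟨le_rfl, hs.2⟩
  calc u s ≤ A * exp (L * (ℓ - s)) := hgronwall
    _ ≤ A * exp (L * ℓ) := by gcongr; linarith [hs.1]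

lemma intervalIntegrable_of_eq_integral_add (hℓ : 0 ≤ ℓ) (hf : ∀ x, ε₀ ≤ x → 0 ≤ f x)
    (hf_mono : MonotoneOn f (Ici ε₀))
    (hf_lin : ∀ x, ε₀ ≤ x → f x ≤ f ε₀ + L * x) (hL : 0 ≤ L) (hμ0 : 0 ≤ μ 0)
    (hμ : AntitoneOn μ (Icc 0 ℓ)) (huε : ∀ s ∈ Icc 0 ℓ, ε₀ ≤ u s)
    (hu : ∀ s ∈ Icc 0 ℓ, u s = (∫ t in s..ℓ, f (u t)) + μ s) :
    IntervalIntegrable (fun t => f (u t)) volume 0 ℓ := by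
  set E := {s | s ∈ Icc 0 ℓ ∧ IntervalIntegrable (fun t => f (u t)) volume s ℓ}
  have hEsub : E ⊆ Icc 0 ℓ := sep_subset _ _
  have hE : MeasurableSet E := OrdConnected.measurableSet ⟨fun s hs t ht x hx =>
    ⟨⟨hs.1.1.trans hx.1, hx.2.trans ht.1.2⟩, hs.2.mono_set_left ⟨hx.1, hx.2.trans ht.1.2⟩⟩⟩
  have hfu : ∀ {s}, AntitoneOn u s → s ⊆ Icc 0 ℓ → AntitoneOn (fun t => f (u t)) s :=
    fun hanti hs x hx y hy hxy => hf_mono (huε y (hs hy)) (huε x (hs hx)) (hanti hx hy hxy)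
  have huμ : AntitoneOn u (Icc 0 ℓ \ E) := (hμ.mono sdiff_subset).congr fun t ht =>
    (eq_datum_of_not_intervalIntegrable hu ht.1 fun h => ht.2 ⟨ht.1, h⟩).symm
  have hbound : ∀ t ∈ Icc 0 ℓ, ‖f (u t)‖ ≤ f ((μ 0 + f ε₀ * ℓ) * exp (L * ℓ)) := by
    intro t ht
    have hK := le_mul_exp_of_eq_integral_add hf hf_lin hL hμ0 hμ huε hu t ht
    rw [Real.norm_of_nonneg (hf _ (huε t ht))]
    exact hf_mono (huε t ht) ((huε t ht).trans hK) hK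
  have hfin : ∀ s ⊆ Icc (0 : ℝ) ℓ, volume s ≠ ⊤ := fun s hs =>
    ((measure_mono hs).trans_lt measure_Icc_lt_top).ne
  rw [intervalIntegrable_iff_integrableOn_Icc_of_le hℓ, ← union_sdiff_cancel hEsub]
  exact ((hfu (antitoneOn_of_eq_integral_add hf hμ huε hu) hEsub).integrableOn_of_norm_le hE
    (hfin E hEsub) fun t ht => hbound t (hEsub ht)).union
    ((hfu huμ sdiff_subset).integrableOn_of_norm_le (measurableSet_Icc.diff hE)
      (hfin _ sdiff_subset) fun t ht => hbound t ht.1)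

end IntegralEquation

lemma sub_sum_le_integral_sub_sum {ι : Type*} [Fintype ι] {w g m : ℝ → ℝ}
    {wi gi mi : ι → ℝ → ℝ} {s ℓ : ℝ} (hg : IntervalIntegrable g volume s ℓ)
    (hgi : ∀ i, IntervalIntegrable (gi i) volume s ℓ)
    (hw : w s = (∫ t in s..ℓ, g t) + m s) (hwi : ∀ i, wi i s = (∫ t in s..ℓ, gi i t) + mi i s)
    (hm : m s ≤ ∑ i, mi i s) :
    w s - ∑ i, wi i s ≤ ∫ t in s..ℓ, (g t - ∑ i, gi i t) := by
  rw [intervalIntegral.integral_sub hg (intervalIntegrable_finsetSum _ fun i _ => hgi i),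
    intervalIntegral.integral_finsetSum fun i _ => hgi i, hw,
    Finset.sum_congr rfl fun i _ => hwi i, Finset.sum_add_distrib]
  linarith

theorem le_sum_of_eq_integral_add {ι : Type*} [Fintype ι] {f w m : ℝ → ℝ}
    {wi mi : ι → ℝ → ℝ} {ℓ ε₀ L K : ℝ} (hL : 0 ≤ L) (hf0 : f 0 ≤ 0)
    (hf_add : ∀ x y, 0 ≤ x → 0 ≤ y → f (x + y) ≤ f x + f y)
    (hf_lip : ∀ x y, ε₀ ≤ x → ε₀ ≤ y → f x - f y ≤ L * max (x - y) 0)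
    (hw_int : IntervalIntegrable (fun t => f (w t)) volume 0 ℓ)
    (hwi_int : ∀ i, IntervalIntegrable (fun t => f (wi i t)) volume 0 ℓ)
    (hwK : ∀ s ∈ Icc 0 ℓ, w s ≤ K) (hwε : ∀ s ∈ Icc 0 ℓ, ε₀ ≤ w s)
    (hwi_nonneg : ∀ i, ∀ s ∈ Icc 0 ℓ, 0 ≤ wi i s) (hWε : ∀ s ∈ Icc 0 ℓ, ε₀ ≤ ∑ i, wi i s)
    (hsum : ∀ s ∈ Icc 0 ℓ, m s ≤ ∑ i, mi i s)
    (hw : ∀ s ∈ Icc 0 ℓ, w s = (∫ t in s..ℓ, f (w t)) + m s)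
    (hwi : ∀ i, ∀ s ∈ Icc 0 ℓ, wi i s = (∫ t in s..ℓ, f (wi i t)) + mi i s) :
    ∀ s ∈ Icc 0 ℓ, w s ≤ ∑ i, wi i s := by
  have hsubadd : ∀ t ∈ Icc 0 ℓ, f (∑ i, wi i t) ≤ ∑ i, f (wi i t) := fun t ht =>
    Finset.le_sum_of_subadditive_on_pred f (0 ≤ ·) hf0 hf_add (fun _ _ => add_nonneg) _
      fun i _ => hwi_nonneg i t ht
  intro s hs
  have hgronwall := le_mul_exp_of_le_add_integral (u := fun t => w t - ∑ i, wi i t)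
    (g := fun t => f (w t) - ∑ i, f (wi i t)) (A := 0) (B := K) le_rfl hL
    (hw_int.sub (intervalIntegrable_finsetSum _ fun i _ => hwi_int i))
    (fun t ht => by
      linarith [hwK t ht, Finset.sum_nonneg (s := .univ) fun i _ => hwi_nonneg i t ht])
    (fun t ht => by linarith [hsubadd t ht, hf_lip _ _ (hwε t ht) (hWε t ht)])
    (fun t ht => by
      simpa using sub_sum_le_integral_sub_sum (hw_int.mono_set_left ht)
        (fun i => (hwi_int i).mono_set_left ht) (hw t ht) (fun i => hwi i t ht) (hsum t ht))
    s hs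
  simpa using hgronwall

/-- If `∑ᵢ mᵢ ≥ m` pointwise, and `w`, `wᵢ` solve the backward integral equations
with data `m`, `mᵢ` and `f` satisfying (A1), then `∑ᵢ wᵢ(s) ≥ w(s)` on `[0,ℓ]`. -/
theorem stmt_7 (ℓ ε₀ : ℝ) (hℓ : 0 < ℓ) (hε₀ : 0 < ε₀)
    (f f' f'' : ℝ → ℝ)
    (hcont : ContinuousOn f (Set.Ici 0))
    (hfnn : ∀ s, 0 ≤ s → 0 ≤ f s)
    (hf0 : f 0 = 0)
    (hd1 : ∀ s, 0 < s → HasDerivAt f (f' s) s)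
    (hd1pos : ∀ s, 0 < s → 0 < f' s)
    (hd2 : ∀ s, 0 < s → HasDerivAt f' (f'' s) s)
    (hd2np : ∀ s, 0 < s → f'' s ≤ 0)
    (q : ℕ) (m : ℝ → ℝ) (mi : Fin q → ℝ → ℝ)
    (hm : AntitoneOn m (Set.Icc 0 ℓ))
    (hmε : ∀ s ∈ Set.Icc (0:ℝ) ℓ, ε₀ ≤ m s)
    (hmi : ∀ i, AntitoneOn (mi i) (Set.Icc 0 ℓ))
    (hmiε : ∀ i, ∀ s ∈ Set.Icc (0:ℝ) ℓ, ε₀ ≤ mi i s)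
    (hsum : ∀ s ∈ Set.Icc (0:ℝ) ℓ, m s ≤ ∑ i, mi i s)
    (w : ℝ → ℝ) (wi : Fin q → ℝ → ℝ)
    (hwε : ∀ s ∈ Set.Icc (0:ℝ) ℓ, ε₀ ≤ w s)
    (hwiε : ∀ i, ∀ s ∈ Set.Icc (0:ℝ) ℓ, ε₀ ≤ wi i s)
    (hw : ∀ s ∈ Set.Icc (0:ℝ) ℓ, w s = (∫ t in s..ℓ, f (w t)) + m s)
    (hwi : ∀ i, ∀ s ∈ Set.Icc (0:ℝ) ℓ, wi i s = (∫ t in s..ℓ, f (wi i t)) + mi i s) :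
    ∀ s ∈ Set.Icc (0:ℝ) ℓ, w s ≤ ∑ i, wi i s := by
  have hconc : ConcaveOn ℝ (Ici 0) f := concaveOn_of_hasDerivWithinAt2_nonpos (convex_Ici 0) hcont
    (by simpa using fun x hx => (hd1 x hx).hasDerivWithinAt)
    (by simpa using fun x hx => (hd2 x hx).hasDerivWithinAt) (by simpa using hd2np)
  have hmono : MonotoneOn f (Ici 0) := monotoneOn_of_hasDerivWithinAt_nonneg (convex_Ici 0) hcont
    (by simpa using fun x hx => (hd1 x hx).hasDerivWithinAt)
    (by simpa using fun x hx => (hd1pos x hx).le)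
  have hlip : ∀ x y, ε₀ ≤ x → ε₀ ≤ y → f x - f y ≤ f' ε₀ * max (x - y) 0 := fun x y hx hy =>
    hconc.sub_le_mul_max_sub hmono hε₀.le (hd1 ε₀ hε₀) (hε₀.le.trans hx) (hε₀.le.trans hy) hy
  have hL := (hd1pos ε₀ hε₀).le
  have hlin : ∀ x, ε₀ ≤ x → f x ≤ f ε₀ + f' ε₀ * x := fun x hx => by
    nlinarith [hlip x ε₀ hx le_rfl, max_eq_left (sub_nonneg.2 hx)]
  have hfε : ∀ x, ε₀ ≤ x → 0 ≤ f x := fun x hx => hfnn x (hε₀.le.trans hx)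
  have hmonoε := hmono.mono (Ici_subset_Ici.2 hε₀.le)
  have h0 : (0 : ℝ) ∈ Icc 0 ℓ := ⟨le_rfl, hℓ.le⟩
  have hwint := intervalIntegrable_of_eq_integral_add hℓ.le hfε hmonoε hlin hL
    (hε₀.le.trans (hmε 0 h0)) hm hwε hw
  have hwiint := fun i => intervalIntegrable_of_eq_integral_add hℓ.le hfε hmonoε hlin hL
    (hε₀.le.trans (hmiε i 0 h0)) (hmi i) (hwiε i) (hwi i)
  have hwK := le_mul_exp_of_eq_integral_add hfε hlin hL (hε₀.le.trans (hmε 0 h0)) hm hwε hw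
  refine le_sum_of_eq_integral_add hL hf0.le (fun x y hx hy => hconc.map_add_le hf0.ge hx hy)
    hlip hwint hwiint hwK hwε (fun i t ht => hε₀.le.trans (hwiε i t ht)) (fun t ht => ?_)
    hsum hw hwi
  exact (hmε t ht).trans <| (hsum t ht).trans <| Finset.sum_le_sum fun i _ =>
    datum_le_of_eq_integral_add hfε (hwiε i) (hwi i) t ht
end

section
/- In part (iii) of the ODE stability lemma: if m_n → m in L¹([0,T]), m_n(0) → m(0+), and the sets J_n ⊆ [0,T] satisfy meas(J_n) → 0, then the solutions w_n of w_n(t) = ∫_t^T f_n(s, w_n(s)) ds + m_n(t), where f_n(t,ω) = f(ω) for t ∉ J_n and 0 for t ∈ J_n, satisfy ‖w_n - w‖_{L¹([0,T])} → 0 and w_n(0) → w(0+), where w solves w(t) = ∫_t^T f(w(s)) ds + m(t). -/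
/-!
Replacing `f` by `x ↦ f (max x ε)` makes it globally Lipschitz and nonnegative without changing
the equations. Since the interval integral is junk-valued on non-integrable functions, one first
shows that every solution has an integrable forcing term; it is then antitone. Subtracting the
equations for `wₙ` and `w`, the Lipschitz bound off `Jₙ` and the bound `f (w) ≤ C` on `Jₙ` give
`|wₙ - w| (s) ≤ C |Jₙ| + |mₙ - m| (s) + L ∫_s^T |wₙ - w|`. Integrating over `[t, T]` and applying
Grönwall's inequality bounds `‖wₙ - w‖₁` by `(C |Jₙ| T + ‖mₙ - m‖₁) e^{LT}`. The same estimate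
at `s = 0`, together with `w (0+) = ∫_0^T f (w) + m (0+)`, gives `wₙ 0 → w (0+)`.
-/

open Set MeasureTheory Filter Topology Real
open scoped NNReal Nat

lemma mul_integral_comp_mul_sub {L : ℝ} (hL : L ≠ 0) (f : ℝ → ℝ) (t T : ℝ) :
    L * ∫ s in t..T, f (L * (T - s)) = ∫ u in 0..L * (T - t), f u := by
  simp_rw [mul_sub]
  rw [intervalIntegral.integral_comp_sub_mul f hL, smul_eq_mul, ← mul_assoc, mul_inv_cancel₀ hL,
    one_mul, sub_self]

lemma integral_exp_add_pow_div_factorial (A B x : ℝ) (k : ℕ) :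
    ∫ u in 0..x, (A * exp u + B * u ^ k / k !) = A * (exp x - 1) + B * x ^ (k + 1) / (k + 1)! := by
  rw [intervalIntegral.integral_add (Continuous.intervalIntegrable (by fun_prop) _ _)
    (Continuous.intervalIntegrable (by fun_prop) _ _), intervalIntegral.integral_const_mul,
    intervalIntegral.integral_div, intervalIntegral.integral_const_mul, integral_exp, integral_pow,
    Nat.factorial_succ, exp_zero]
  push_cast
  field_simp
  ring

lemma le_exp_add_pow_div_factorial_of_le_add_mul_integral {V : ℝ → ℝ} {A B L t₀ T : ℝ}
    (hL : 0 < L) (hA : 0 ≤ A) (hV : IntegrableOn V (Icc t₀ T)) (hVB : ∀ t ∈ Icc t₀ T, V t ≤ B)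
    (hineq : ∀ t ∈ Icc t₀ T, V t ≤ A + L * ∫ s in t..T, V s) (k : ℕ) :
    ∀ t ∈ Icc t₀ T, V t ≤ A * exp (L * (T - t)) + B * (L * (T - t)) ^ k / k ! := by
  induction k with
  | zero =>
    intro t ht
    have : 0 ≤ A * exp (L * (T - t)) := by positivity
    simp only [pow_zero, Nat.factorial_zero, Nat.cast_one, mul_one, div_one]
    linarith [hVB t ht]
  | succ k ih =>
    intro t ht
    have hmono : ∫ s in t..T, V s ≤
        ∫ s in t..T, (A * exp (L * (T - s)) + B * (L * (T - s)) ^ k / k !) :=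
      intervalIntegral.integral_mono_on ht.2
        ((intervalIntegrable_iff_integrableOn_Icc_of_le ht.2).mpr
          (hV.mono_set (Icc_subset_Icc_left ht.1)))
        (Continuous.intervalIntegrable (by fun_prop) _ _) fun s hs => ih s ⟨ht.1.trans hs.1, hs.2⟩
    calc V t ≤ A + L * ∫ s in t..T, V s := hineq t ht
      _ ≤ A + L * ∫ s in t..T, (A * exp (L * (T - s)) + B * (L * (T - s)) ^ k / k !) := by
        gcongr
      _ = A * exp (L * (T - t)) + B * (L * (T - t)) ^ (k + 1) / (k + 1)! := by
        rw [mul_integral_comp_mul_sub hL.ne' (fun u => A * exp u + B * u ^ k / k !),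
          integral_exp_add_pow_div_factorial]
        ring

theorem le_mul_exp_of_le_add_mul_integral {V : ℝ → ℝ} {A B L t₀ T : ℝ}
    (hL : 0 ≤ L) (hA : 0 ≤ A) (hV : IntegrableOn V (Icc t₀ T)) (hVB : ∀ t ∈ Icc t₀ T, V t ≤ B)
    (hineq : ∀ t ∈ Icc t₀ T, V t ≤ A + L * ∫ s in t..T, V s) :
    ∀ t ∈ Icc t₀ T, V t ≤ A * exp (L * (T - t)) := by
  intro t ht
  rcases hL.eq_or_lt with rfl | hL
  · simpa using hineq t ht
  have hlim : Tendsto (fun k : ℕ => A * exp (L * (T - t)) + B * (L * (T - t)) ^ k / k !) atTop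
      (𝓝 (A * exp (L * (T - t)))) := by
    simpa [mul_div_assoc] using
      tendsto_const_nhds.add ((FloorSemiring.tendsto_pow_div_factorial_atTop _).const_mul B)
  exact ge_of_tendsto' hlim fun k =>
    le_exp_add_pow_div_factorial_of_le_add_mul_integral hL hA hV hVB hineq k t ht

lemma antitoneOn_integral_add {h g : ℝ → ℝ} {t T : ℝ} (hh : ∀ s ∈ Icc t T, 0 ≤ h s)
    (hint : IntegrableOn h (Icc t T)) (hg : AntitoneOn g (Icc t T)) :
    AntitoneOn (fun s => (∫ u in s..T, h u) + g s) (Icc t T) := by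
  intro s₁ hs₁ s₂ hs₂ hs
  have hT : T ∈ Icc t T := ⟨hs₁.1.trans hs₁.2, le_rfl⟩
  have hpos : 0 ≤ ∫ u in s₁..s₂, h u :=
    intervalIntegral.integral_nonneg hs fun u hu => hh u ⟨hs₁.1.trans hu.1, hu.2.trans hs₂.2⟩
  dsimp only
  rw [← intervalIntegral.integral_add_adjacent_intervals
    (hint.mono_set (uIcc_subset_Icc hs₁ hs₂)).intervalIntegrable
    (hint.mono_set (uIcc_subset_Icc hs₂ hT)).intervalIntegrable]
  linarith [hg hs₁ hs₂ hs]

theorem integral_le_mul_exp_of_le_add_mul_integral {u a : ℝ → ℝ} {c K T : ℝ} (hK : 0 ≤ K)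
    (hc : 0 ≤ c) (hT : 0 ≤ T) (hu : IntegrableOn u (Icc 0 T)) (hu_nonneg : ∀ s ∈ Icc 0 T, 0 ≤ u s)
    (ha : IntegrableOn a (Icc 0 T)) (ha_nonneg : ∀ s ∈ Icc 0 T, 0 ≤ a s)
    (hineq : ∀ s ∈ Icc 0 T, u s ≤ c + a s + K * ∫ r in s..T, u r) :
    ∫ s in 0..T, u s ≤ (c * T + ∫ s in 0..T, a s) * exp (K * T) := by
  set Φ := fun t => ∫ s in t..T, u s
  have h0 : (0 : ℝ) ∈ Icc 0 T := left_mem_Icc.mpr hT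
  have hΦa : AntitoneOn Φ (Icc 0 T) := by
    simpa using antitoneOn_integral_add hu_nonneg hu (antitoneOn_const (c := 0))
  have hΦi : IntegrableOn Φ (Icc 0 T) := hΦa.integrableOn_isCompact isCompact_Icc
  have hΦineq : ∀ t ∈ Icc 0 T, Φ t ≤ (c * T + ∫ s in 0..T, a s) + K * ∫ s in t..T, Φ s := by
    intro t ht
    have hsub : uIcc t T ⊆ Icc 0 T := uIcc_subset_Icc ht (right_mem_Icc.mpr hT)
    have ha' := (ha.mono_set hsub).intervalIntegrable
    have hΦ' := ((hΦi.mono_set hsub).intervalIntegrable).const_mul K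
    have ha_le : ∫ s in t..T, a s ≤ ∫ s in 0..T, a s :=
      intervalIntegral.integral_mono_interval ht.1 ht.2 le_rfl
        (ae_restrict_of_forall_mem measurableSet_Ioc fun s hs =>
          ha_nonneg s (Ioc_subset_Icc_self hs))
        ((intervalIntegrable_iff_integrableOn_Icc_of_le hT).mpr ha)
    calc Φ t ≤ ∫ s in t..T, (c + a s + K * Φ s) :=
          intervalIntegral.integral_mono_on ht.2 (hu.mono_set hsub).intervalIntegrable
            ((intervalIntegrable_const.add ha').add hΦ') fun s hs =>
              hineq s (hsub (Icc_subset_uIcc hs))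
      _ = c * (T - t) + (∫ s in t..T, a s) + K * ∫ s in t..T, Φ s := by
          rw [intervalIntegral.integral_add (intervalIntegrable_const.add ha') hΦ',
            intervalIntegral.integral_add intervalIntegrable_const ha',
            intervalIntegral.integral_const, intervalIntegral.integral_const_mul, smul_eq_mul,
            mul_comm (T - t)]
      _ ≤ (c * T + ∫ s in 0..T, a s) + K * ∫ s in t..T, Φ s := by nlinarith [ht.1]
  simpa [Φ] using le_mul_exp_of_le_add_mul_integral hK
    (add_nonneg (mul_nonneg hc hT) (intervalIntegral.integral_nonneg hT ha_nonneg)) hΦi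
    (fun t ht => hΦa h0 ht ht.1) hΦineq 0 h0

lemma LipschitzWith.le_add_mul_of_nonneg {F : ℝ → ℝ} {K : ℝ≥0} (hF : LipschitzWith K F) {x : ℝ}
    (hx : 0 ≤ x) : F x ≤ F 0 + K * x := by
  simpa [Real.dist_0_eq_abs, abs_of_nonneg hx] using hF.le_add_mul x 0

lemma LipschitzOnWith.lipschitzWith_comp_max {f : ℝ → ℝ} {K : ℝ≥0} {ε : ℝ}
    (hf : LipschitzOnWith K f (Ici ε)) : LipschitzWith K fun x => f (max x ε) := by
  refine LipschitzWith.of_dist_le_mul fun x y => ?_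
  calc dist (f (max x ε)) (f (max y ε)) ≤ K * dist (max x ε) (max y ε) :=
        hf.dist_le_mul _ (le_max_right x ε) _ (le_max_right y ε)
    _ ≤ K * dist x y := by
        gcongr
        exact abs_max_sub_max_le_abs x y ε

lemma integrableOn_indicator_comp_of_antitoneOn {F ψ : ℝ → ℝ} {K : ℝ≥0} {s E : Set ℝ} {M : ℝ}
    (hF : LipschitzWith K F) (hF_nonneg : ∀ x, 0 ≤ F x) (hE : MeasurableSet E)
    (hs : MeasurableSet s) (hs' : volume s ≠ ⊤) (hψ : AntitoneOn ψ s)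
    (hψ_nonneg : ∀ x ∈ s, 0 ≤ ψ x) (hψM : ∀ x ∈ s, ψ x ≤ M) :
    IntegrableOn (E.indicator fun x => F (ψ x)) s := by
  refine Integrable.mono' (integrableOn_const (C := F 0 + K * M) hs')
    ((hF.continuous.measurable.comp_aemeasurable
      (aemeasurable_restrict_of_antitoneOn hs hψ)).indicator hE).aestronglyMeasurable ?_
  filter_upwards [ae_restrict_mem hs] with x hx
  rw [Real.norm_eq_abs, abs_of_nonneg (indicator_nonneg (fun y _ => hF_nonneg (ψ y)) x)]
  calc E.indicator (fun x => F (ψ x)) x ≤ F (ψ x) :=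
        indicator_le_self' (fun y _ => hF_nonneg (ψ y)) x
    _ ≤ F 0 + K * ψ x := hF.le_add_mul_of_nonneg (hψ_nonneg x hx)
    _ ≤ F 0 + K * M := by gcongr; exact hψM x hx

lemma abs_integral_indicator_compl_sub_integral_le {F v w : ℝ → ℝ} {K : ℝ≥0} {J : Set ℝ}
    {T C s : ℝ} (hF : LipschitzWith K F) (hJ : MeasurableSet J)
    (hC : ∀ u ∈ Icc 0 T, |F (w u)| ≤ C)
    (hvF : IntegrableOn (Jᶜ.indicator fun u => F (v u)) (Icc 0 T))
    (hwF : IntegrableOn (fun u => F (w u)) (Icc 0 T))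
    (hvw : IntegrableOn (fun u => |v u - w u|) (Icc 0 T)) (hs : s ∈ Icc 0 T) :
    |(∫ u in s..T, Jᶜ.indicator (fun u => F (v u)) u) - ∫ u in s..T, F (w u)|
      ≤ C * volume.real (J ∩ Icc 0 T) + K * ∫ u in s..T, |v u - w u| := by
  have hC0 : 0 ≤ C := (abs_nonneg _).trans (hC s hs)
  have hsT : uIcc s T ⊆ Icc 0 T := uIcc_subset_Icc hs ⟨hs.1.trans hs.2, le_rfl⟩
  have hvF' := (hvF.mono_set hsT).intervalIntegrable
  have hwF' := (hwF.mono_set hsT).intervalIntegrable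
  have hvw' := ((hvw.mono_set hsT).intervalIntegrable).const_mul (K : ℝ)
  have hJC := ((integrableOn_const (C := C) (measure_Icc_lt_top (μ := volume)).ne).indicator hJ
    |>.mono_set hsT).intervalIntegrable
  have hpt : ∀ u ∈ Icc s T, |Jᶜ.indicator (fun u => F (v u)) u - F (w u)|
      ≤ K * |v u - w u| + J.indicator (fun _ => C) u := by
    intro u hu
    by_cases huJ : u ∈ J
    · simpa [huJ] using add_le_add (by positivity : 0 ≤ (K : ℝ) * |v u - w u|)
        (hC u (hsT (Icc_subset_uIcc hu)))
    · simpa [huJ, ← Real.dist_eq] using hF.dist_le_mul (v u) (w u)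
  calc |(∫ u in s..T, Jᶜ.indicator (fun u => F (v u)) u) - ∫ u in s..T, F (w u)|
      ≤ ∫ u in s..T, |Jᶜ.indicator (fun u => F (v u)) u - F (w u)| := by
        rw [← intervalIntegral.integral_sub hvF' hwF']
        exact intervalIntegral.abs_integral_le_integral_abs hs.2
    _ ≤ ∫ u in s..T, (K * |v u - w u| + J.indicator (fun _ => C) u) :=
        intervalIntegral.integral_mono_on hs.2 (hvF'.sub hwF').abs (hvw'.add hJC) hpt
    _ = K * (∫ u in s..T, |v u - w u|) + C * volume.real (J ∩ Ioc s T) := by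
        rw [intervalIntegral.integral_add hvw' hJC, intervalIntegral.integral_const_mul,
          intervalIntegral.integral_of_le hs.2 (f := J.indicator _), integral_indicator_const C hJ,
          measureReal_restrict_apply hJ, smul_eq_mul, mul_comm C]
    _ ≤ C * volume.real (J ∩ Icc 0 T) + K * ∫ u in s..T, |v u - w u| := by
        have : volume.real (J ∩ Ioc s T) ≤ volume.real (J ∩ Icc 0 T) :=
          measureReal_mono (inter_subset_inter_right J (Ioc_subset_Icc_self.trans
            (Icc_subset_Icc_left hs.1))) ((measure_mono inter_subset_right).trans_lt
              measure_Icc_lt_top).ne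
        nlinarith

/-- The interval integral is `0` when the forcing term is not integrable, so a solution is not
a priori known to solve the equation in the genuine sense. -/
def IsBackwardSolution (F g : ℝ → ℝ) (E : Set ℝ) (T : ℝ) (v : ℝ → ℝ) : Prop :=
  ∀ t ∈ Icc 0 T, v t = (∫ s in t..T, E.indicator (fun u => F (v u)) s) + g t

lemma isBackwardSolution_comp_max {f g v : ℝ → ℝ} {E : Set ℝ} {T ε : ℝ}
    (hvε : ∀ t ∈ Icc 0 T, ε ≤ v t)
    (hv : ∀ t ∈ Icc 0 T, v t = (∫ s in t..T, E.indicator (fun u => f (v u)) s) + g t) :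
    IsBackwardSolution (fun x => f (max x ε)) g E T v := by
  intro t ht
  rw [hv t ht]
  congr 1
  refine intervalIntegral.integral_congr fun s hs => ?_
  rw [uIcc_of_le ht.2] at hs
  by_cases hsE : s ∈ E <;> simp [hsE, max_eq_left (hvε s ⟨ht.1.trans hs.1, hs.2⟩)]

namespace IsBackwardSolution

variable {F g g₁ g₂ v w : ℝ → ℝ} {K : ℝ≥0} {E J : Set ℝ} {T : ℝ}

lemma le (hF_nonneg : ∀ x, 0 ≤ F x) (hv : IsBackwardSolution F g E T v) :
    ∀ t ∈ Icc 0 T, g t ≤ v t := by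
  intro t ht
  rw [hv t ht, le_add_iff_nonneg_left]
  exact intervalIntegral.integral_nonneg ht.2 fun u _ => indicator_nonneg (fun y _ => hF_nonneg _) u

lemma antitoneOn_of_integrableOn (hF_nonneg : ∀ x, 0 ≤ F x) (hg : AntitoneOn g (Icc 0 T))
    (hv : IsBackwardSolution F g E T v) {t : ℝ} (ht : t ∈ Icc 0 T)
    (hint : IntegrableOn (E.indicator fun u => F (v u)) (Icc t T)) :
    AntitoneOn v (Icc t T) := by
  have hsub : Icc t T ⊆ Icc 0 T := Icc_subset_Icc_left ht.1
  refine (antitoneOn_integral_add (fun u _ => indicator_nonneg (fun y _ => hF_nonneg _) u) hint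
    (hg.mono hsub)).congr fun s hs => (hv s (hsub hs)).symm

/-- Grönwall applied to `v s ≤ g 0 + F 0 * T + K ∫_s^T v`. -/
lemma le_of_integrableOn (hF : LipschitzWith K F) (hF_nonneg : ∀ x, 0 ≤ F x)
    (hg : AntitoneOn g (Icc 0 T)) (hg_nonneg : ∀ t ∈ Icc 0 T, 0 ≤ g t)
    (hv : IsBackwardSolution F g E T v) {t : ℝ} (ht : t ∈ Icc 0 T)
    (hint : IntegrableOn (E.indicator fun u => F (v u)) (Icc t T)) :
    ∀ s ∈ Icc t T, v s ≤ (g 0 + F 0 * T) * exp (K * T) := by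
  have hsub : Icc t T ⊆ Icc 0 T := Icc_subset_Icc_left ht.1
  have hanti := hv.antitoneOn_of_integrableOn hF_nonneg hg ht hint
  have hvint : IntegrableOn v (Icc t T) := hanti.integrableOn_isCompact isCompact_Icc
  have hv_nonneg : ∀ s ∈ Icc t T, 0 ≤ v s := fun s hs =>
    (hg_nonneg s (hsub hs)).trans (hv.le hF_nonneg s (hsub hs))
  have hineq : ∀ s ∈ Icc t T, v s ≤ (g 0 + F 0 * T) + K * ∫ u in s..T, v u := by
    intro s hs
    have hsT : Icc s T ⊆ Icc t T := Icc_subset_Icc_left hs.1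
    have hvs : IntervalIntegrable v volume s T :=
      (intervalIntegrable_iff_integrableOn_Icc_of_le hs.2).mpr (hvint.mono_set hsT)
    have hforce : ∫ u in s..T, E.indicator (fun u => F (v u)) u ≤ ∫ u in s..T, (F 0 + K * v u) :=
      intervalIntegral.integral_mono_on hs.2
        ((intervalIntegrable_iff_integrableOn_Icc_of_le hs.2).mpr (hint.mono_set hsT))
        (intervalIntegrable_const.add (hvs.const_mul _)) fun u hu =>
          (indicator_le_self' (fun y _ => hF_nonneg _) u).trans
            (hF.le_add_mul_of_nonneg (hv_nonneg u (hsT hu)))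
    rw [intervalIntegral.integral_add intervalIntegrable_const (hvs.const_mul _),
      intervalIntegral.integral_const, intervalIntegral.integral_const_mul, smul_eq_mul] at hforce
    have : (T - s) * F 0 ≤ T * F 0 := by nlinarith [hF_nonneg 0, (hsub hs).1]
    linarith [hv s (hsub hs), hg ⟨le_rfl, ht.1.trans ht.2⟩ (hsub hs) (hsub hs).1]
  intro s hs
  calc v s ≤ (g 0 + F 0 * T) * exp (K * (T - s)) :=
        le_mul_exp_of_le_add_mul_integral K.coe_nonneg
          (by nlinarith [hg_nonneg 0 ⟨le_rfl, ht.1.trans ht.2⟩, hF_nonneg 0, ht.1.trans ht.2]) hvint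
          (fun u hu => hanti ⟨le_rfl, ht.2⟩ hu hu.1) hineq s hs
    _ ≤ (g 0 + F 0 * T) * exp (K * T) := by
        gcongr
        · nlinarith [hg_nonneg 0 ⟨le_rfl, ht.1.trans ht.2⟩, hF_nonneg 0, ht.1.trans ht.2]
        · linarith [(hsub hs).1]

/-- Let `t₀` be the infimum of the `t` for which the forcing term is integrable on `[t, T]`.
On `(t₀, T]` the solution is antitone and bounded by the a priori bound; on `[0, t₀)` the integral
in the equation vanishes, so `v = g` there. Both pieces give a bounded measurable forcing term. -/
lemma integrableOn (hF : LipschitzWith K F) (hF_nonneg : ∀ x, 0 ≤ F x) (hE : MeasurableSet E)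
    (hg : AntitoneOn g (Icc 0 T)) (hg_nonneg : ∀ t ∈ Icc 0 T, 0 ≤ g t) (hT : 0 ≤ T)
    (hv : IsBackwardSolution F g E T v) :
    IntegrableOn (E.indicator fun u => F (v u)) (Icc 0 T) := by
  set h := E.indicator fun u => F (v u)
  set S := {t | t ∈ Icc 0 T ∧ IntegrableOn h (Icc t T)}
  have hTS : T ∈ S := ⟨⟨hT, le_rfl⟩, by simp⟩
  have hbdd : BddBelow S := ⟨0, fun s hs => hs.1.1⟩
  set t₀ := sInf S
  have ht₀ : t₀ ∈ Icc 0 T := ⟨le_csInf ⟨T, hTS⟩ fun s hs => hs.1.1, csInf_le hbdd hTS⟩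
  have hv_nonneg : ∀ s ∈ Icc 0 T, 0 ≤ v s := fun s hs =>
    (hg_nonneg s hs).trans (hv.le hF_nonneg s hs)
  have hIoc : ∀ s ∈ Ioc t₀ T, IntegrableOn h (Icc s T) := by
    intro s hs
    obtain ⟨r, hrS, hrs⟩ := exists_lt_of_csInf_lt ⟨T, hTS⟩ hs.1
    exact hrS.2.mono_set (Icc_subset_Icc_left hrs.le)
  have hsub : Ioc t₀ T ⊆ Icc 0 T := fun s hs => ⟨ht₀.1.trans hs.1.le, hs.2⟩
  have hright : IntegrableOn h (Icc t₀ T) := by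
    have hanti : AntitoneOn v (Ioc t₀ T) := fun s₁ hs₁ s₂ hs₂ hs =>
      hv.antitoneOn_of_integrableOn hF_nonneg hg (hsub hs₁) (hIoc s₁ hs₁) ⟨le_rfl, hs₁.2⟩
        ⟨hs, hs₂.2⟩ hs
    have hbound : ∀ s ∈ Ioc t₀ T, v s ≤ (g 0 + F 0 * T) * exp (K * T) := fun s hs =>
      hv.le_of_integrableOn hF hF_nonneg hg hg_nonneg (hsub hs) (hIoc s hs) s ⟨le_rfl, hs.2⟩
    exact (integrableOn_Icc_iff_integrableOn_Ioc).mpr <| integrableOn_indicator_comp_of_antitoneOn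
      hF hF_nonneg hE measurableSet_Ioc measure_Ioc_lt_top.ne hanti
      (fun s hs => hv_nonneg s (hsub hs)) hbound
  have hsub' : Ico 0 t₀ ⊆ Icc 0 T := fun s hs => ⟨hs.1, hs.2.le.trans ht₀.2⟩
  have hvg : EqOn (E.indicator fun u => F (g u)) h (Ico 0 t₀) := by
    intro s hs
    have hnot : ¬ IntervalIntegrable h volume s T := by
      rw [intervalIntegrable_iff_integrableOn_Icc_of_le (hsub' hs).2]
      exact fun hint => (csInf_le hbdd (show s ∈ S from ⟨hsub' hs, hint⟩)).not_gt hs.2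
    have hvs := hv s (hsub' hs)
    rw [intervalIntegral.integral_undef hnot, zero_add] at hvs
    simp only [h, indicator, hvs]
  have hleft : IntegrableOn h (Ico 0 t₀) :=
    (integrableOn_indicator_comp_of_antitoneOn hF hF_nonneg hE measurableSet_Ico
      measure_Ico_lt_top.ne (hg.mono hsub') (fun s hs => hg_nonneg s (hsub' hs))
      (fun s hs => hg (left_mem_Icc.mpr hT) (hsub' hs) hs.1)).congr_fun hvg measurableSet_Ico
  simpa [Ico_union_Icc_eq_Icc ht₀.1 ht₀.2] using hleft.union hright

lemma antitoneOn (hF : LipschitzWith K F) (hF_nonneg : ∀ x, 0 ≤ F x) (hE : MeasurableSet E)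
    (hg : AntitoneOn g (Icc 0 T)) (hg_nonneg : ∀ t ∈ Icc 0 T, 0 ≤ g t) (hT : 0 ≤ T)
    (hv : IsBackwardSolution F g E T v) : AntitoneOn v (Icc 0 T) :=
  hv.antitoneOn_of_integrableOn hF_nonneg hg ⟨le_rfl, hT⟩
    (hv.integrableOn hF hF_nonneg hE hg hg_nonneg hT)

lemma tendsto_nhdsGT_zero {g₀ : ℝ} (hT : 0 < T)
    (hv : IsBackwardSolution F g E T v)
    (hint : IntegrableOn (E.indicator fun u => F (v u)) (Icc 0 T))
    (hg : Tendsto g (𝓝[>] 0) (𝓝 g₀)) :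
    Tendsto v (𝓝[>] 0) (𝓝 ((∫ u in 0..T, E.indicator (fun u => F (v u)) u) + g₀)) := by
  have hprim := intervalIntegral.continuousOn_primitive_interval_left
    (by rwa [uIcc_of_le hT.le] : IntegrableOn (E.indicator fun u => F (v u)) (uIcc 0 T))
  rw [uIcc_of_le hT.le] at hprim
  have hle : 𝓝[>] (0 : ℝ) ≤ 𝓝[Icc 0 T] 0 := by
    rw [← nhdsWithin_Ioc_eq_nhdsGT hT]
    exact nhdsWithin_mono _ Ioc_subset_Icc_self
  refine ((hprim 0 (left_mem_Icc.mpr hT.le)).tendsto.mono_left hle |>.add hg).congr' ?_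
  filter_upwards [Ioc_mem_nhdsGT hT] with t ht
  exact (hv t (Ioc_subset_Icc_self ht)).symm

lemma abs_sub_integral_add_le (hF : LipschitzWith K F) (hF_nonneg : ∀ x, 0 ≤ F x)
    (hJ : MeasurableSet J) (hT : 0 ≤ T) (hg₁ : AntitoneOn g₁ (Icc 0 T))
    (hg₁_nonneg : ∀ t ∈ Icc 0 T, 0 ≤ g₁ t) (hg₂ : AntitoneOn g₂ (Icc 0 T))
    (hg₂_nonneg : ∀ t ∈ Icc 0 T, 0 ≤ g₂ t) (hv : IsBackwardSolution F g₁ Jᶜ T v)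
    (hw : IsBackwardSolution F g₂ univ T w) {s : ℝ} (hs : s ∈ Icc 0 T) (c : ℝ) :
    |v s - ((∫ u in s..T, F (w u)) + c)| ≤ (F 0 + K * w 0) * volume.real (J ∩ Icc 0 T)
      + K * (∫ u in s..T, |v u - w u|) + |g₁ s - c| := by
  have h0 : (0 : ℝ) ∈ Icc 0 T := left_mem_Icc.mpr hT
  have hwa := hw.antitoneOn hF hF_nonneg .univ hg₂ hg₂_nonneg hT
  have hC : ∀ u ∈ Icc 0 T, |F (w u)| ≤ F 0 + K * w 0 := fun u hu => by
    rw [abs_of_nonneg (hF_nonneg _)]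
    calc F (w u) ≤ F 0 + K * w u :=
          hF.le_add_mul_of_nonneg ((hg₂_nonneg u hu).trans (hw.le hF_nonneg u hu))
      _ ≤ F 0 + K * w 0 := by gcongr; exact hwa h0 hu hu.1
  have hva := hv.antitoneOn hF hF_nonneg hJ.compl hg₁ hg₁_nonneg hT
  have hvw : IntegrableOn (fun u => |v u - w u|) (Icc 0 T) :=
    (hva.integrableOn_isCompact isCompact_Icc).sub (hwa.integrableOn_isCompact isCompact_Icc) |>.abs
  have hwF : IntegrableOn (fun u => F (w u)) (Icc 0 T) := by
    simpa using hw.integrableOn hF hF_nonneg .univ hg₂ hg₂_nonneg hT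
  have := abs_integral_indicator_compl_sub_integral_le hF hJ hC
    (hv.integrableOn hF hF_nonneg hJ.compl hg₁ hg₁_nonneg hT) hwF hvw hs
  rw [hv s hs, add_sub_add_comm]
  linarith [abs_add_le ((∫ u in s..T, Jᶜ.indicator (fun u => F (v u)) u) - ∫ u in s..T, F (w u))
    (g₁ s - c)]

lemma integral_abs_sub_le (hF : LipschitzWith K F) (hF_nonneg : ∀ x, 0 ≤ F x)
    (hJ : MeasurableSet J) (hT : 0 ≤ T) (hg₁ : AntitoneOn g₁ (Icc 0 T))
    (hg₁_nonneg : ∀ t ∈ Icc 0 T, 0 ≤ g₁ t) (hg₂ : AntitoneOn g₂ (Icc 0 T))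
    (hg₂_nonneg : ∀ t ∈ Icc 0 T, 0 ≤ g₂ t) (hv : IsBackwardSolution F g₁ Jᶜ T v)
    (hw : IsBackwardSolution F g₂ univ T w) :
    ∫ t in 0..T, |v t - w t| ≤ ((F 0 + K * w 0) * volume.real (J ∩ Icc 0 T) * T
      + ∫ t in 0..T, |g₁ t - g₂ t|) * exp (K * T) := by
  have h0 : (0 : ℝ) ∈ Icc 0 T := left_mem_Icc.mpr hT
  have hc : 0 ≤ (F 0 + K * w 0) * volume.real (J ∩ Icc 0 T) :=
    mul_nonneg (add_nonneg (hF_nonneg 0) (mul_nonneg K.coe_nonneg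
      ((hg₂_nonneg 0 h0).trans (hw.le hF_nonneg 0 h0)))) measureReal_nonneg
  have hva := hv.antitoneOn hF hF_nonneg hJ.compl hg₁ hg₁_nonneg hT
  have hwa := hw.antitoneOn hF hF_nonneg .univ hg₂ hg₂_nonneg hT
  have hvw : IntegrableOn (fun u => |v u - w u|) (Icc 0 T) :=
    (hva.integrableOn_isCompact isCompact_Icc).sub (hwa.integrableOn_isCompact isCompact_Icc) |>.abs
  have hgg : IntegrableOn (fun u => |g₁ u - g₂ u|) (Icc 0 T) :=
    (hg₁.integrableOn_isCompact isCompact_Icc).sub (hg₂.integrableOn_isCompact isCompact_Icc) |>.abs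
  refine integral_le_mul_exp_of_le_add_mul_integral K.coe_nonneg hc hT hvw
    (fun _ _ => abs_nonneg _) hgg (fun _ _ => abs_nonneg _) fun s hs => ?_
  have := hv.abs_sub_integral_add_le hF hF_nonneg hJ hT hg₁ hg₁_nonneg hg₂ hg₂_nonneg hw hs (g₂ s)
  rw [show w s = (∫ u in s..T, F (w u)) + g₂ s by simpa using hw s hs]
  linarith

end IsBackwardSolution

theorem stmt_10_general (T ε : ℝ) (hT : 0 < T) (hε : 0 < ε)
    (f : ℝ → ℝ) (L : NNReal)
    (hf : LipschitzOnWith L f (Set.Ici ε))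
    (hfnn : ∀ x ∈ Set.Ici ε, 0 ≤ f x)
    (m : ℝ → ℝ) (mn : ℕ → ℝ → ℝ) (Jn : ℕ → Set ℝ)
    (hm : AntitoneOn m (Set.Icc 0 T))
    (hmε : ∀ t ∈ Set.Icc (0:ℝ) T, ε ≤ m t)
    (hmn : ∀ n, AntitoneOn (mn n) (Set.Icc 0 T))
    (hmnε : ∀ n, ∀ t ∈ Set.Icc (0:ℝ) T, ε ≤ mn n t)
    (hJmeas : ∀ n, MeasurableSet (Jn n))
    (hJ : Tendsto (fun n => volume (Jn n)) atTop (nhds 0))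
    (hL1 : Tendsto (fun n => ∫ t in (0:ℝ)..T, |mn n t - m t|) atTop (nhds 0))
    (m0 : ℝ)
    (hm0 : Tendsto m (nhdsWithin 0 (Set.Ioi 0)) (nhds m0))
    (hmn0 : Tendsto (fun n => mn n 0) atTop (nhds m0))
    (w : ℝ → ℝ) (wn : ℕ → ℝ → ℝ)
    (hwε : ∀ t ∈ Set.Icc (0:ℝ) T, ε ≤ w t)
    (hw : ∀ t ∈ Set.Icc (0:ℝ) T, w t = (∫ s in t..T, f (w s)) + m t)
    (hwnε : ∀ n, ∀ t ∈ Set.Icc (0:ℝ) T, ε ≤ wn n t)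
    (hwn : ∀ n, ∀ t ∈ Set.Icc (0:ℝ) T,
      wn n t = (∫ s in t..T, ((Jn n)ᶜ).indicator (fun u => f (wn n u)) s) + mn n t)
    (w0 : ℝ)
    (hw0 : Tendsto w (nhdsWithin 0 (Set.Ioi 0)) (nhds w0)) :
    Tendsto (fun n => ∫ t in (0:ℝ)..T, |wn n t - w t|) atTop (nhds 0) ∧
      Tendsto (fun n => wn n 0) atTop (nhds w0) := by
  set F := fun x => f (max x ε)
  have hF : LipschitzWith L F := hf.lipschitzWith_comp_max
  have hF_nonneg : ∀ x, 0 ≤ F x := fun x => hfnn _ (le_max_right x ε)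
  have hm_nonneg : ∀ t ∈ Icc 0 T, 0 ≤ m t := fun t ht => hε.le.trans (hmε t ht)
  have hmn_nonneg : ∀ n, ∀ t ∈ Icc 0 T, 0 ≤ mn n t := fun n t ht => hε.le.trans (hmnε n t ht)
  have hwF : IsBackwardSolution F m univ T w :=
    isBackwardSolution_comp_max hwε fun t ht => by simpa only [indicator_univ] using hw t ht
  have hwnF : ∀ n, IsBackwardSolution F (mn n) (Jn n)ᶜ T (wn n) := fun n =>
    isBackwardSolution_comp_max (hwnε n) (hwn n)
  have hδ : Tendsto (fun n => volume.real (Jn n ∩ Icc 0 T)) atTop (𝓝 0) :=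
    (ENNReal.tendsto_toReal ENNReal.zero_ne_top).comp <| tendsto_of_tendsto_of_tendsto_of_le_of_le
      tendsto_const_nhds hJ (fun _ => zero_le) fun n => measure_mono inter_subset_left
  have hL1w : Tendsto (fun n => ∫ t in (0:ℝ)..T, |wn n t - w t|) atTop (𝓝 0) := by
    refine squeeze_zero (fun n => intervalIntegral.integral_nonneg hT.le fun _ _ => abs_nonneg _)
      (fun n => (hwnF n).integral_abs_sub_le hF hF_nonneg (hJmeas n) hT.le (hmn n) (hmn_nonneg n)
        hm hm_nonneg hwF) ?_
    simpa using (((hδ.const_mul (F 0 + L * w 0)).mul_const T).add hL1).mul_const (exp (L * T))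
  have hw0_eq : w0 = (∫ t in (0:ℝ)..T, F (w t)) + m0 := by
    refine tendsto_nhds_unique hw0 ?_
    simpa using
      hwF.tendsto_nhdsGT_zero hT (hwF.integrableOn hF hF_nonneg .univ hm hm_nonneg hT.le) hm0
  have hdist_le : ∀ n, dist (wn n 0) w0 ≤ (F 0 + L * w 0) * volume.real (Jn n ∩ Icc 0 T)
      + L * (∫ t in (0:ℝ)..T, |wn n t - w t|) + |mn n 0 - m0| := fun n => by
    rw [Real.dist_eq, hw0_eq]
    exact (hwnF n).abs_sub_integral_add_le hF hF_nonneg (hJmeas n) hT.le (hmn n) (hmn_nonneg n)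
      hm hm_nonneg hwF (left_mem_Icc.mpr hT.le) m0
  refine ⟨hL1w, tendsto_iff_dist_tendsto_zero.mpr (squeeze_zero (fun _ => dist_nonneg) hdist_le ?_)⟩
  simpa using
    ((hδ.const_mul (F 0 + L * w 0)).add (hL1w.const_mul (L : ℝ))).add (hmn0.sub_const m0).abs

/-- Stability of the backward integral equation: if `mₙ → m` in `L¹([0,T])`,
`mₙ(0) → m(0+)`, and `meas(Jₙ) → 0`, then the solutions `wₙ` of
`wₙ(t) = ∫_t^T fₙ(s, wₙ(s)) ds + mₙ(t)` (with `fₙ(s,ω) = f(ω)` for `s ∉ Jₙ` and `0`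
on `Jₙ`) converge to the solution `w` of `w(t) = ∫_t^T f(w(s)) ds + m(t)` in
`L¹([0,T])`, and `wₙ(0) → w(0+)`. -/
theorem stmt_10 (T ε : ℝ) (hT : 0 < T) (hε : 0 < ε)
    (f : ℝ → ℝ) (L : NNReal)
    (hf : LipschitzOnWith L f (Set.Ici ε))
    (hfnn : ∀ x ∈ Set.Ici ε, 0 ≤ f x)
    (m : ℝ → ℝ) (mn : ℕ → ℝ → ℝ) (Jn : ℕ → Set ℝ)
    (hm : AntitoneOn m (Set.Icc 0 T))
    (hmε : ∀ t ∈ Set.Icc (0:ℝ) T, ε ≤ m t)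
    (hmn : ∀ n, AntitoneOn (mn n) (Set.Icc 0 T))
    (hmnε : ∀ n, ∀ t ∈ Set.Icc (0:ℝ) T, ε ≤ mn n t)
    (hJmeas : ∀ n, MeasurableSet (Jn n))
    (hJsub : ∀ n, Jn n ⊆ Set.Icc 0 T)
    (hJ : Tendsto (fun n => volume (Jn n)) atTop (nhds 0))
    (hL1 : Tendsto (fun n => ∫ t in (0:ℝ)..T, |mn n t - m t|) atTop (nhds 0))
    (m0 : ℝ)
    (hm0 : Tendsto m (nhdsWithin 0 (Set.Ioi 0)) (nhds m0))
    (hmn0 : Tendsto (fun n => mn n 0) atTop (nhds m0))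
    (w : ℝ → ℝ) (wn : ℕ → ℝ → ℝ)
    (hwε : ∀ t ∈ Set.Icc (0:ℝ) T, ε ≤ w t)
    (hw : ∀ t ∈ Set.Icc (0:ℝ) T, w t = (∫ s in t..T, f (w s)) + m t)
    (hwnε : ∀ n, ∀ t ∈ Set.Icc (0:ℝ) T, ε ≤ wn n t)
    (hwn : ∀ n, ∀ t ∈ Set.Icc (0:ℝ) T,
      wn n t = (∫ s in t..T, ((Jn n)ᶜ).indicator (fun u => f (wn n u)) s) + mn n t)
    (w0 : ℝ)
    (hw0 : Tendsto w (nhdsWithin 0 (Set.Ioi 0)) (nhds w0)) :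
    Tendsto (fun n => ∫ t in (0:ℝ)..T, |wn n t - w t|) atTop (nhds 0) ∧
      Tendsto (fun n => wn n 0) atTop (nhds w0) :=
  stmt_10_general T ε hT hε f L hf hfnn m mn Jn hm hmε hmn hmnε hJmeas hJ hL1 m0 hm0 hmn0 w wn hwε
    hw hwnε hwn w0 hw0
end

section
/- If two Lipschitz curves γ : [0,t] → ℝ^d and γ' : [0,t'] → ℝ^d are equivalent via nondecreasing Lipschitz surjective reparameterizations η : [0,T] → [0,t], η' : [0,T] → [0,t'] with γ∘η = γ'∘η', then they are also equivalent via 1-Lipschitz reparameterizations on the interval [0, t+t']: the maps η̃, η̃' defined implicitly by η̃(η(s)+η'(s)) = η(s) and η̃'(η(s)+η'(s)) = η'(s) are well-defined, 1-Lipschitz, nondecreasing, surjective, and satisfy γ∘η̃ = γ'∘η̃'. -/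
open Set

/-- Endpoints of a monotone surjection onto an interval. -/
lemma stmt_13_endpoints {T t : ℝ} (hT : 0 ≤ T) (ht : 0 ≤ t) {η : ℝ → ℝ}
    (hm : MonotoneOn η (Icc 0 T)) (hs : η '' Icc 0 T = Icc 0 t) :
    η 0 = 0 ∧ η T = t := by
  have h0T : (0:ℝ) ∈ Icc 0 T := ⟨le_refl _, hT⟩
  have hTT : T ∈ Icc (0:ℝ) T := ⟨hT, le_refl _⟩
  have hmem0 : η 0 ∈ Icc (0:ℝ) t := hs ▸ mem_image_of_mem η h0T
  have hmemT : η T ∈ Icc (0:ℝ) t := hs ▸ mem_image_of_mem η hTT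
  have h0 : (0:ℝ) ∈ η '' Icc 0 T := hs ▸ (⟨le_refl _, ht⟩ : (0:ℝ) ∈ Icc 0 t)
  have hte : t ∈ η '' Icc 0 T := hs ▸ (⟨ht, le_refl _⟩ : t ∈ Icc 0 t)
  obtain ⟨s0, hs0, hs0e⟩ := h0
  obtain ⟨s1, hs1, hs1e⟩ := hte
  constructor
  · exact le_antisymm (hs0e ▸ hm h0T hs0 hs0.1) hmem0.1
  · exact le_antisymm hmemT.2 (hs1e ▸ hm hs1 hTT hs1.2)

/-- If two Lipschitz curves `γ : [0,t] → ℝ^d`, `γ' : [0,t'] → ℝ^d` are equivalent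
via continuous nondecreasing surjective reparameterizations `η, η' : [0,T] → [0,t], [0,t']`
with `γ∘η = γ'∘η'`, then they are equivalent via 1-Lipschitz reparameterizations on
`[0, t+t']`: the maps `η̃, η̃'` determined by `η̃(η(s)+η'(s)) = η(s)` and
`η̃'(η(s)+η'(s)) = η'(s)` are well-defined, 1-Lipschitz, nondecreasing, surjective and
satisfy `γ∘η̃ = γ'∘η̃'`. -/
theorem stmt_13 {d : ℕ} (t t' T : ℝ) (ht : 0 ≤ t) (ht' : 0 ≤ t') (hT : 0 ≤ T)
    (γ γ' : ℝ → EuclideanSpace ℝ (Fin d)) (Kγ Kγ' : NNReal)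
    (hγ : LipschitzOnWith Kγ γ (Set.Icc 0 t))
    (hγ' : LipschitzOnWith Kγ' γ' (Set.Icc 0 t'))
    (η η' : ℝ → ℝ)
    (hηc : ContinuousOn η (Set.Icc 0 T)) (hηm : MonotoneOn η (Set.Icc 0 T))
    (hηs : η '' Set.Icc 0 T = Set.Icc 0 t)
    (hη'c : ContinuousOn η' (Set.Icc 0 T)) (hη'm : MonotoneOn η' (Set.Icc 0 T))
    (hη's : η' '' Set.Icc 0 T = Set.Icc 0 t')
    (heq : ∀ s ∈ Set.Icc (0:ℝ) T, γ (η s) = γ' (η' s)) :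
    ∃ ηt ηt' : ℝ → ℝ,
      LipschitzOnWith 1 ηt (Set.Icc 0 (t + t')) ∧
      MonotoneOn ηt (Set.Icc 0 (t + t')) ∧
      ηt '' Set.Icc 0 (t + t') = Set.Icc 0 t ∧
      LipschitzOnWith 1 ηt' (Set.Icc 0 (t + t')) ∧
      MonotoneOn ηt' (Set.Icc 0 (t + t')) ∧
      ηt' '' Set.Icc 0 (t + t') = Set.Icc 0 t' ∧
      (∀ s ∈ Set.Icc (0:ℝ) T, ηt (η s + η' s) = η s ∧ ηt' (η s + η' s) = η' s) ∧
      ∀ u ∈ Set.Icc (0:ℝ) (t + t'), γ (ηt u) = γ' (ηt' u) := by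
  classical
  obtain ⟨hη0, hηT⟩ := stmt_13_endpoints hT ht hηm hηs
  obtain ⟨hη'0, hη'T⟩ := stmt_13_endpoints hT ht' hη'm hη's
  set σ : ℝ → ℝ := fun s => η s + η' s with hσdef
  have hσm : MonotoneOn σ (Icc 0 T) := hηm.add hη'm
  have hσc : ContinuousOn σ (Icc 0 T) := hηc.add hη'c
  -- key estimates
  have hkey : ∀ s1 ∈ Icc (0:ℝ) T, ∀ s2 ∈ Icc (0:ℝ) T,
      |η s1 - η s2| ≤ |σ s1 - σ s2| ∧ |η' s1 - η' s2| ≤ |σ s1 - σ s2| := by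
    have main : ∀ s1 ∈ Icc (0:ℝ) T, ∀ s2 ∈ Icc (0:ℝ) T, s1 ≤ s2 →
        |η s1 - η s2| ≤ |σ s1 - σ s2| ∧ |η' s1 - η' s2| ≤ |σ s1 - σ s2| := by
      intro s1 h1 s2 h2 hle
      have a1 : η s1 ≤ η s2 := hηm h1 h2 hle
      have a2 : η' s1 ≤ η' s2 := hη'm h1 h2 hle
      have a3 : σ s1 ≤ σ s2 := add_le_add a1 a2
      rw [abs_sub_comm (η s1), abs_sub_comm (η' s1), abs_sub_comm (σ s1),
        abs_of_nonneg (by linarith), abs_of_nonneg (by linarith),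
        abs_of_nonneg (by linarith)]
      simp only [hσdef]
      constructor <;> linarith
    intro s1 h1 s2 h2
    rcases le_total s1 s2 with h | h
    · exact main s1 h1 s2 h2 h
    · have := main s2 h2 s1 h1 h
      rw [abs_sub_comm (η s1), abs_sub_comm (η' s1), abs_sub_comm (σ s1)]
      exact this
  -- surjectivity of σ
  have hσsurj : ∀ u ∈ Icc (0:ℝ) (t + t'), ∃ s, s ∈ Icc (0:ℝ) T ∧ σ s = u := by
    intro u hu
    have : Icc (σ 0) (σ T) ⊆ σ '' Icc 0 T := intermediate_value_Icc hT hσc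
    have hu' : u ∈ Icc (σ 0) (σ T) := by
      simp only [hσdef, hη0, hη'0, hηT, hη'T]
      simpa using hu
    obtain ⟨s, hs, hse⟩ := this hu'
    exact ⟨s, hs, hse⟩
  set sel : ℝ → ℝ := fun u =>
    if h : ∃ s, s ∈ Icc (0:ℝ) T ∧ σ s = u then h.choose else 0 with hseldef
  have hsel : ∀ u ∈ Icc (0:ℝ) (t + t'), sel u ∈ Icc (0:ℝ) T ∧ σ (sel u) = u := by
    intro u hu
    have h := hσsurj u hu
    simp only [hseldef, dif_pos h]
    exact h.choose_spec
  refine ⟨η ∘ sel, η' ∘ sel, ?_, ?_, ?_, ?_, ?_, ?_, ?_, ?_⟩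
  · -- Lipschitz η ∘ sel
    rw [lipschitzOnWith_iff_dist_le_mul]
    intro u hu v hv
    obtain ⟨hsu, hsue⟩ := hsel u hu
    obtain ⟨hsv, hsve⟩ := hsel v hv
    simp only [Function.comp_apply, Real.dist_eq, NNReal.coe_one, one_mul]
    have := (hkey _ hsu _ hsv).1
    rwa [hsue, hsve] at this
  · -- monotone
    intro u hu v hv huv
    obtain ⟨hsu, hsue⟩ := hsel u hu
    obtain ⟨hsv, hsve⟩ := hsel v hv
    simp only [Function.comp_apply]
    rcases le_total (sel u) (sel v) with h | h
    · exact hηm hsu hsv h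
    · have hvu : σ (sel v) ≤ σ (sel u) := hσm hsv hsu h
      have huv' : u = v := le_antisymm huv (by rwa [hsue, hsve] at hvu)
      have hk := (hkey _ hsu _ hsv).1
      rw [hsue, hsve] at hk
      have habs : |u - v| = 0 := by rw [huv', sub_self, abs_zero]
      rw [habs] at hk
      linarith [sub_eq_zero.mp (abs_nonpos_iff.mp hk)]
  · -- image
    apply Subset.antisymm
    · rintro x ⟨u, hu, rfl⟩
      exact hηs ▸ mem_image_of_mem η (hsel u hu).1
    · intro x hx
      have : x ∈ η '' Icc 0 T := hηs ▸ hx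
      obtain ⟨s, hs, rfl⟩ := this
      have hηmem : η s ∈ Icc (0:ℝ) t := hηs ▸ mem_image_of_mem η hs
      have hη'mem : η' s ∈ Icc (0:ℝ) t' := hη's ▸ mem_image_of_mem η' hs
      have huI : σ s ∈ Icc (0:ℝ) (t + t') :=
        ⟨add_nonneg hηmem.1 hη'mem.1, add_le_add hηmem.2 hη'mem.2⟩
      refine ⟨σ s, huI, ?_⟩
      obtain ⟨hsu, hsue⟩ := hsel (σ s) huI
      have := (hkey _ hsu _ hs).1
      rw [hsue, sub_self, abs_zero] at this
      simpa [sub_eq_zero] using sub_eq_zero.mp (abs_nonpos_iff.mp this)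
  · -- Lipschitz η' ∘ sel
    rw [lipschitzOnWith_iff_dist_le_mul]
    intro u hu v hv
    obtain ⟨hsu, hsue⟩ := hsel u hu
    obtain ⟨hsv, hsve⟩ := hsel v hv
    simp only [Function.comp_apply, Real.dist_eq, NNReal.coe_one, one_mul]
    have := (hkey _ hsu _ hsv).2
    rwa [hsue, hsve] at this
  · intro u hu v hv huv
    obtain ⟨hsu, hsue⟩ := hsel u hu
    obtain ⟨hsv, hsve⟩ := hsel v hv
    simp only [Function.comp_apply]
    rcases le_total (sel u) (sel v) with h | h
    · exact hη'm hsu hsv h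
    · have hvu : σ (sel v) ≤ σ (sel u) := hσm hsv hsu h
      have huv' : u = v := le_antisymm huv (by rwa [hsue, hsve] at hvu)
      have hk := (hkey _ hsu _ hsv).2
      rw [hsue, hsve] at hk
      have habs : |u - v| = 0 := by rw [huv', sub_self, abs_zero]
      rw [habs] at hk
      linarith [sub_eq_zero.mp (abs_nonpos_iff.mp hk)]
  · apply Subset.antisymm
    · rintro x ⟨u, hu, rfl⟩
      exact hη's ▸ mem_image_of_mem η' (hsel u hu).1
    · intro x hx
      have : x ∈ η' '' Icc 0 T := hη's ▸ hx
      obtain ⟨s, hs, rfl⟩ := this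
      have hηmem : η s ∈ Icc (0:ℝ) t := hηs ▸ mem_image_of_mem η hs
      have hη'mem : η' s ∈ Icc (0:ℝ) t' := hη's ▸ mem_image_of_mem η' hs
      have huI : σ s ∈ Icc (0:ℝ) (t + t') :=
        ⟨add_nonneg hηmem.1 hη'mem.1, add_le_add hηmem.2 hη'mem.2⟩
      refine ⟨σ s, huI, ?_⟩
      obtain ⟨hsu, hsue⟩ := hsel (σ s) huI
      have := (hkey _ hsu _ hs).2
      rw [hsue, sub_self, abs_zero] at this
      simpa [sub_eq_zero] using sub_eq_zero.mp (abs_nonpos_iff.mp this)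
  · -- the determining equations
    intro s hs
    have hηmem : η s ∈ Icc (0:ℝ) t := hηs ▸ mem_image_of_mem η hs
    have hη'mem : η' s ∈ Icc (0:ℝ) t' := hη's ▸ mem_image_of_mem η' hs
    have huI : σ s ∈ Icc (0:ℝ) (t + t') :=
      ⟨add_nonneg hηmem.1 hη'mem.1, add_le_add hηmem.2 hη'mem.2⟩
    obtain ⟨hsu, hsue⟩ := hsel (σ s) huI
    have h1 := (hkey _ hsu _ hs).1
    have h2 := (hkey _ hsu _ hs).2
    rw [hsue, sub_self, abs_zero] at h1 h2
    have e1 := sub_eq_zero.mp (abs_nonpos_iff.mp h1)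
    have e2 := sub_eq_zero.mp (abs_nonpos_iff.mp h2)
    exact ⟨e1, e2⟩
  · intro u hu
    exact heq _ (hsel u hu).1
end
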